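/- arXiv:1410.5721 — 11 statements merged into one kernel-verified Lean document; each statement's English description precedes it below -/
import Mathlib

section
/- Let φ(z) = Σ_{j=1}^m a_j e^{b_j z} with a_j ∈ ℂ \ {0} and distinct nonzero b_j, where |b_1| = ··· = |b_p| > |b_j| for j = p+1,...,m, and write b_j = |b_1| e^{iθ_j}. Then |φ(r e^{-iθ_1})| → +∞ as r → +∞ along positive real r. -/
/-!
Rotating the ray turns the exponents `b j` into `b j * e` with `e = exp (-i θ₁)`, so that
`b₁ e = |b₁|` is real and positive. Every other `b j * e` has modulus at most `|b₁|` and differs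
from `|b₁|`, hence has real part strictly below `|b₁|`. Along the ray the term `a₁ e^{|b₁| r}`
therefore dominates: after factoring it out, the remaining sum tends to `a₁ ≠ 0`.
-/

open Complex Filter Finset Topology ComplexOrder

lemma Complex.re_lt_of_norm_le_of_ne {z : ℂ} {x : ℝ} (h : ‖z‖ ≤ x) (hne : z ≠ x) : z.re < x := by
  refine (z.re_le_norm.trans h).lt_of_ne fun hre => hne ?_
  have hnonneg : 0 ≤ z := re_eq_norm.mp (le_antisymm z.re_le_norm (h.trans hre.ge))
  exact Complex.ext hre (nonneg_iff.mp hnonneg).2.symm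

lemma tendsto_cexp_mul_ofReal_nhds_zero {β : ℂ} (hβ : β.re < 0) :
    Tendsto (fun r : ℝ => exp (β * r)) atTop (𝓝 0) := by
  rw [tendsto_zero_iff_norm_tendsto_zero]
  simp only [norm_exp, re_mul_ofReal]
  exact Real.tendsto_exp_atBot.comp (tendsto_id.const_mul_atTop_of_neg hβ)

lemma sum_mul_cexp_eq_cexp_mul_add_sum_erase {ι : Type*} [DecidableEq ι] (s : Finset ι)
    (a β : ι → ℂ) {i : ι} (hi : i ∈ s) (z : ℂ) :
    ∑ j ∈ s, a j * exp (β j * z) =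
      exp (β i * z) * (a i + ∑ j ∈ s.erase i, a j * exp ((β j - β i) * z)) := by
  rw [← add_sum_erase _ _ hi, mul_add, mul_sum, mul_comm (exp _)]
  congr 1
  refine sum_congr rfl fun j _ => ?_
  rw [sub_mul, exp_sub]
  field_simp

theorem tendsto_norm_sum_mul_cexp_atTop {ι : Type*} [Fintype ι] (a β : ι → ℂ) {i : ι}
    (ha : a i ≠ 0) (hpos : 0 < (β i).re) (hdom : ∀ j ≠ i, (β j).re < (β i).re) :
    Tendsto (fun r : ℝ => ‖∑ j, a j * exp (β j * r)‖) atTop atTop := by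
  classical
  have hrest : Tendsto (fun r : ℝ => a i + ∑ j ∈ univ.erase i, a j * exp ((β j - β i) * r))
      atTop (𝓝 (a i)) := by
    convert tendsto_const_nhds.add <| tendsto_finsetSum (univ.erase i) fun j hj =>
      (tendsto_cexp_mul_ofReal_nhds_zero (β := β j - β i)
        (by simpa using hdom j (ne_of_mem_erase hj))).const_mul (a j)
    simp
  simp_rw [sum_mul_cexp_eq_cexp_mul_add_sum_erase univ a β (mem_univ i), norm_mul, norm_exp,
    re_mul_ofReal]
  exact (Real.tendsto_exp_atTop.comp (tendsto_id.const_mul_atTop hpos)).atTop_mul_pos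
    (norm_pos_iff.mpr ha) hrest.norm

theorem exponential_like_tendsto_atTop_along_ray_general
    (m p : ℕ) (hm : 0 < m) (hp : 0 < p)
    (a b : Fin m → ℂ) (ha : ∀ j, a j ≠ 0) (hb : ∀ j, b j ≠ 0)
    (hbinj : Function.Injective b)
    (heq : ∀ j : Fin m, (j : ℕ) < p → ‖b j‖ = ‖b ⟨0, hm⟩‖)
    (hlt : ∀ j : Fin m, p ≤ (j : ℕ) → ‖b j‖ < ‖b ⟨0, hm⟩‖)
    (θ : Fin m → ℝ)
    (hθ : ∀ j : Fin m, (j : ℕ) < p →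
      b j = ((‖b ⟨0, hm⟩‖ : ℝ) : ℂ) * Complex.exp (Complex.I * (θ j : ℂ)))
    (φ : ℂ → ℂ) (hφ : ∀ z, φ z = ∑ j, a j * Complex.exp (b j * z)) :
    Filter.Tendsto
      (fun r : ℝ => ‖φ ((r : ℂ) * Complex.exp (-Complex.I * (θ ⟨0, hm⟩ : ℂ)))‖)
      Filter.atTop Filter.atTop := by
  set j₀ : Fin m := ⟨0, hm⟩
  set e := exp (-I * θ j₀)
  have hb₀ : b j₀ * e = ‖b j₀‖ := by
    rw [hθ j₀ hp, mul_assoc, ← exp_add]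
    simp
  have hnorm : ∀ j, ‖b j * e‖ ≤ ‖b j₀‖ := fun j => by
    rw [norm_mul, show ‖e‖ = 1 by simp [e, norm_exp], mul_one]
    rcases lt_or_ge (j : ℕ) p with hj | hj
    exacts [(heq j hj).le, (hlt j hj).le]
  have hdom : ∀ j ≠ j₀, (b j * e).re < (b j₀ * e).re := fun j hj => by
    rw [hb₀, ofReal_re]
    refine re_lt_of_norm_le_of_ne (hnorm j) fun h => hj (hbinj ?_)
    exact mul_right_cancel₀ (exp_ne_zero _) (h.trans hb₀.symm)
  refine (tendsto_norm_sum_mul_cexp_atTop a (fun j => b j * e) (ha j₀) ?_ hdom).congr fun r => ?_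
  · simpa [hb₀] using hb j₀
  · rw [hφ]
    exact congrArg _ (sum_congr rfl fun j _ => by ring_nf)

/-- Let `φ(z) = ∑_{j=1}^m a_j e^{b_j z}` with nonzero `a_j` and distinct
nonzero `b_j`, where `|b_1| = ⋯ = |b_p| > |b_j|` for `j = p+1,…,m`, and write
`b_j = |b_1| e^{iθ_j}` (for `j = 1,…,p`).  Then `|φ(r e^{-iθ_1})| → +∞` as `r → +∞`. -/
theorem exponential_like_tendsto_atTop_along_ray
    (m p : ℕ) (hm : 0 < m) (hp : 0 < p) (hpm : p ≤ m)
    (a b : Fin m → ℂ) (ha : ∀ j, a j ≠ 0) (hb : ∀ j, b j ≠ 0)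
    (hbinj : Function.Injective b)
    (heq : ∀ j : Fin m, (j : ℕ) < p → ‖b j‖ = ‖b ⟨0, hm⟩‖)
    (hlt : ∀ j : Fin m, p ≤ (j : ℕ) → ‖b j‖ < ‖b ⟨0, hm⟩‖)
    (θ : Fin m → ℝ)
    (hθ : ∀ j : Fin m, (j : ℕ) < p →
      b j = ((‖b ⟨0, hm⟩‖ : ℝ) : ℂ) * Complex.exp (Complex.I * (θ j : ℂ)))
    (φ : ℂ → ℂ) (hφ : ∀ z, φ z = ∑ j, a j * Complex.exp (b j * z)) :
    Filter.Tendsto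
      (fun r : ℝ => ‖φ ((r : ℂ) * Complex.exp (-Complex.I * (θ ⟨0, hm⟩ : ℂ)))‖)
      Filter.atTop Filter.atTop :=
  exponential_like_tendsto_atTop_along_ray_general m p hm hp a b ha hb hbinj heq hlt θ hθ φ hφ
end

section
/- Let Ω be a nonempty set and F ⊆ ℂ^Ω a family of functions. Suppose there exists f ∈ F such that f(Ω) is uncountable and φ ∘ f ∈ F for every exponential-like function φ. Then for any set H ⊆ (0,+∞) of cardinality continuum that is linearly independent over ℚ, the family {exp ∘ (r·f) : r ∈ H} is a free system of generators of a subalgebra of ℂ^Ω contained in F ∪ {0}; in particular F is strongly 𝔠-algebrable. -/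
/-!
An exponential-like function `φ` is entire and not identically zero (distinct exponentials
`z ↦ exp (b z)` are linearly independent), so its zeros form a countable set and `φ ∘ f`
cannot vanish when `f` has uncountable range. For distinct `r₁, …, r_N ∈ H`, the function
`P(exp (r₁ f), …, exp (r_N f))` is `φ ∘ f` with `φ z = ∑_d coeff d P · exp (⟨d, r⟩ z)`;
the exponents `⟨d, r⟩` are positive because `P` has no constant term, and pairwise distinct
because `H` is `ℚ`-linearly independent, so `φ` is exponential-like. The generators are
distinct since `X₀ - X₁` does not vanish on them.
-/

/-- A function `φ : ℂ → ℂ` is exponential-like if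
`φ(z) = ∑_{j=1}^m a_j e^{b_j z}` with `m ≥ 1`, nonzero `a_j` and
pairwise distinct nonzero `b_j`. -/
def ExpLike (φ : ℂ → ℂ) : Prop :=
  ∃ (m : ℕ) (_ : 0 < m) (a b : Fin m → ℂ),
    (∀ j, a j ≠ 0) ∧ (∀ j, b j ≠ 0) ∧ Function.Injective b ∧
    ∀ z, φ z = ∑ j, a j * Complex.exp (b j * z)

open Complex MvPolynomial Set

theorem AnalyticOnNhd.countable_setOf_eq_zero {E : Type*} [NormedAddCommGroup E]
    [NormedSpace ℂ E] {f : ℂ → E} (hf : AnalyticOnNhd ℂ f univ) (hne : f ≠ 0) :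
    {z | f z = 0}.Countable := by
  obtain h | h := hf.eqOn_zero_or_eventually_ne_zero_of_preconnected isPreconnected_univ
  · exact absurd (funext fun z => h (mem_univ z)) hne
  · have hdisc : IsDiscrete ({z | f z = 0} ∩ univ) := isDiscrete_of_codiscreteWithin h
    simpa using (HereditarilyLindelofSpace.isLindelof _).countable_of_isDiscrete hdisc

theorem hasDerivAt_cexp_mul_zero (c : ℂ) : HasDerivAt (fun z => cexp (c * z)) c 0 := by
  simpa using ((hasDerivAt_id (0 : ℂ)).const_mul c).cexp

noncomputable def cexpMulChar (c : ℂ) : Multiplicative ℂ →* ℂ where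
  toFun z := cexp (c * z.toAdd)
  map_one' := by simp
  map_mul' x y := by simp [mul_add, exp_add]

/-- Dedekind's independence of characters, applied to the characters `z ↦ exp (c z)` of
`(ℂ, +)`; they are distinct because their derivatives at `0` are. -/
theorem linearIndependent_cexp_mul :
    LinearIndependent ℂ fun c : ℂ => fun z : ℂ => cexp (c * z) := by
  have hinj : Function.Injective cexpMulChar := fun c c' h =>
    (hasDerivAt_cexp_mul_zero c).unique <| by
      simpa [cexpMulChar] using congrArg (fun χ z => χ (Multiplicative.ofAdd z)) h
      ▸ hasDerivAt_cexp_mul_zero c'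
  exact (linearIndependent_monoidHom (Multiplicative ℂ) ℂ).comp _ hinj

namespace ExpLike

variable {φ : ℂ → ℂ}

theorem ne_zero (hφ : ExpLike φ) : φ ≠ 0 := by
  obtain ⟨m, hm, a, b, ha, -, hb, hφ⟩ := hφ
  rintro rfl
  have hsum : ∑ j, a j • (fun z => cexp (b j * z)) = 0 := by
    ext z
    simpa [eq_comm] using hφ z
  exact ha ⟨0, hm⟩ <| Fintype.linearIndependent_iff.mp
    (linearIndependent_cexp_mul.comp b hb) a hsum ⟨0, hm⟩

theorem analyticOnNhd (hφ : ExpLike φ) : AnalyticOnNhd ℂ φ univ := by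
  obtain ⟨m, -, a, b, -, -, -, hφ⟩ := hφ
  rw [show φ = fun z => ∑ j, a j * cexp (b j * z) from funext hφ]
  exact fun z _ => by fun_prop

theorem comp_ne_zero {Ω : Type*} {f : Ω → ℂ} (hφ : ExpLike φ)
    (hf : ¬ (range f).Countable) : φ ∘ f ≠ 0 := fun h =>
  hf <| (hφ.analyticOnNhd.countable_setOf_eq_zero hφ.ne_zero).mono <| by
    rintro _ ⟨x, rfl⟩
    exact congrFun h x

end ExpLike

theorem expLike_finset_sum {ι : Type*} {s : Finset ι} (hs : s.Nonempty) {a b : ι → ℂ}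
    (ha : ∀ i ∈ s, a i ≠ 0) (hb : ∀ i ∈ s, b i ≠ 0) (hinj : InjOn b s) :
    ExpLike fun z => ∑ i ∈ s, a i * cexp (b i * z) := by
  set e : Fin s.card ≃ s := s.equivFin.symm
  refine ⟨s.card, hs.card_pos, fun j => a (e j), fun j => b (e j), fun j => ha _ (e j).2,
    fun j => hb _ (e j).2, fun j k h => e.injective (Subtype.ext (hinj (e j).2 (e k).2 h)),
    fun z => ?_⟩
  dsimp only
  rw [← Finset.sum_coe_sort s]
  exact (e.sum_comp fun i : s => a i * cexp (b i * z)).symm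

section MvPolynomial

variable {σ : Type*}

theorem eval_cexp_ofReal_mul (c : σ → ℝ) (P : MvPolynomial σ ℂ) (z : ℂ) :
    eval (fun i => cexp (c i * z)) P =
      ∑ d ∈ P.support, coeff d P * cexp (Finsupp.linearCombination ℕ c d * z) := by
  rw [eval_eq]
  refine Finset.sum_congr rfl fun d _ => ?_
  simp only [← exp_nat_mul, ← exp_sum, Finsupp.linearCombination_apply, Finsupp.sum,
    nsmul_eq_mul]
  push_cast
  rw [Finset.sum_mul]
  exact congrArg (fun w => _ * cexp w) (Finset.sum_congr rfl fun i _ => by ring)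

theorem Finsupp.linearCombination_nat_pos {c : σ → ℝ} (hc : ∀ i, 0 < c i) {d : σ →₀ ℕ}
    (hd : d ≠ 0) :
    0 < Finsupp.linearCombination ℕ c d := by
  rw [Finsupp.linearCombination_apply, Finsupp.sum]
  exact Finset.sum_pos (fun i hi => nsmul_pos (hc i) (Finsupp.mem_support_iff.mp hi))
    (Finsupp.support_nonempty_iff.mpr hd)

theorem expLike_eval_cexp_ofReal_mul {c : σ → ℝ} (hc : ∀ i, 0 < c i)
    (hind : LinearIndependent ℚ c) {P : MvPolynomial σ ℂ} (hP : P ≠ 0)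
    (hP0 : constantCoeff P = 0) : ExpLike fun z => eval (fun i => cexp (c i * z)) P := by
  have hd : ∀ d ∈ P.support, d ≠ 0 := by
    rintro d hd rfl
    exact mem_support_iff.mp hd (by rwa [constantCoeff_eq] at hP0)
  simp_rw [eval_cexp_ofReal_mul]
  exact expLike_finset_sum (support_nonempty.mpr hP) (fun d => mem_support_iff.mp)
    (fun d h => ofReal_ne_zero.mpr (Finsupp.linearCombination_nat_pos hc (hd d h)).ne')
    (ofReal_injective.comp (hind.restrict_scalars' ℕ)).injOn

end MvPolynomial

theorem strongly_c_algebrable_of_expLike_stable_general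
    (Ω : Type*) (F : Set (Ω → ℂ)) (f : Ω → ℂ)
    (hunc : ¬ (Set.range f).Countable)
    (hstab : ∀ φ : ℂ → ℂ, ExpLike φ → (φ ∘ f) ∈ F)
    (H : Set ℝ) (hH : H ⊆ Set.Ioi (0 : ℝ))
    (hind : LinearIndependent ℚ (fun r : H => (r : ℝ))) :
    (Function.Injective fun r : H => (fun x => Complex.exp ((r : ℝ) * f x))) ∧
    ∀ (N : ℕ) (P : MvPolynomial (Fin N) ℂ), P ≠ 0 → MvPolynomial.constantCoeff P = 0 →
      ∀ r : Fin N → H, Function.Injective r →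
        (fun x : Ω => MvPolynomial.eval (fun i => Complex.exp (((r i : ℝ) : ℂ) * f x)) P) ≠ 0 ∧
        (fun x : Ω => MvPolynomial.eval (fun i => Complex.exp (((r i : ℝ) : ℂ) * f x)) P) ∈ F := by
  have hexp : ∀ (N : ℕ) (P : MvPolynomial (Fin N) ℂ), P ≠ 0 → constantCoeff P = 0 →
      ∀ r : Fin N → H, Function.Injective r →
        ExpLike fun z => eval (fun i => cexp (((r i : ℝ) : ℂ) * z)) P :=
    fun N P hP hP0 r hr =>
      expLike_eval_cexp_ofReal_mul (fun i => hH (r i).2) (hind.comp r hr) hP hP0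
  refine ⟨fun r₁ r₂ h => ?_, fun N P hP hP0 r hr =>
    ⟨(hexp N P hP hP0 r hr).comp_ne_zero hunc, hstab _ (hexp N P hP hP0 r hr)⟩⟩
  by_contra hne
  have hX : (X 0 - X 1 : MvPolynomial (Fin 2) ℂ) ≠ 0 :=
    sub_ne_zero.mpr fun h => zero_ne_one (X_injective h)
  have hr : Function.Injective ![r₁, r₂] := by
    intro i j
    fin_cases i <;> fin_cases j <;> simp [hne, Ne.symm hne]
  refine (hexp 2 _ hX (by simp) _ hr).comp_ne_zero hunc (funext fun x => ?_)
  simpa [sub_eq_zero] using congrFun h x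

/-- Let `Ω` be nonempty and `F ⊆ ℂ^Ω`.  Suppose some `f ∈ F` has
uncountable range and `φ ∘ f ∈ F` for every exponential-like `φ`.  Then for every
set `H ⊆ (0,∞)` of cardinality `𝔠` that is `ℚ`-linearly independent, the family
`{exp ∘ (r·f) : r ∈ H}` is a free system of generators of an algebra contained in
`F ∪ {0}`: the map `r ↦ exp ∘ (r f)` is injective on `H` and, for every `N`, every
nonzero polynomial `P` in `N` variables without constant term, and every injective
choice of `r₁,…,r_N ∈ H`, the function `x ↦ P(e^{r₁ f(x)},…,e^{r_N f(x)})` is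
nonzero and belongs to `F`.  (In particular `F` is strongly `𝔠`-algebrable.) -/
theorem strongly_c_algebrable_of_expLike_stable
    (Ω : Type*) [Nonempty Ω] (F : Set (Ω → ℂ)) (f : Ω → ℂ) (hfF : f ∈ F)
    (hunc : ¬ (Set.range f).Countable)
    (hstab : ∀ φ : ℂ → ℂ, ExpLike φ → (φ ∘ f) ∈ F)
    (H : Set ℝ) (hH : H ⊆ Set.Ioi (0 : ℝ))
    (hcard : Cardinal.mk H = Cardinal.continuum)
    (hind : LinearIndependent ℚ (fun r : H => (r : ℝ))) :
    (Function.Injective fun r : H => (fun x => Complex.exp ((r : ℝ) * f x))) ∧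
    ∀ (N : ℕ) (P : MvPolynomial (Fin N) ℂ), P ≠ 0 → MvPolynomial.constantCoeff P = 0 →
      ∀ r : Fin N → H, Function.Injective r →
        (fun x : Ω => MvPolynomial.eval (fun i => Complex.exp (((r i : ℝ) : ℂ) * f x)) P) ≠ 0 ∧
        (fun x : Ω => MvPolynomial.eval (fun i => Complex.exp (((r i : ℝ) : ℂ) * f x)) P) ∈ F :=
  strongly_c_algebrable_of_expLike_stable_general Ω F f hunc hstab H hH hind
end

section
/- Let Ω be a nonempty set, f : Ω → ℂ with f(Ω) uncountable, let r_1 > ··· > r_N be positive reals linearly independent over ℚ, and let P be a nonzero polynomial in N complex variables without constant term. Then the function x ↦ P(e^{r_1 f(x)}, ..., e^{r_N f(x)}) is not identically zero on Ω. -/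
/-!
Expanding `P`, the function `z ↦ P(e^{r₁ z}, …, e^{r_N z})` is the exponential sum
`∑_d c_d e^{⟨d, r⟩ z}` over the support of `P`, and `ℚ`-linear independence of the `rᵢ` makes the
frequencies `⟨d, r⟩` pairwise distinct. This entire function vanishes on the uncountable set
`f(Ω)`, which has a non-isolated point, so it vanishes identically; since exponentials with
distinct frequencies are linearly independent characters of `(ℂ, +)`, every coefficient of `P`
is zero.
-/

open Complex MvPolynomial Function Set

theorem AnalyticOnNhd.eqOn_zero_of_preconnected_of_not_countable {𝕜 E : Type*}
    [NontriviallyNormedField 𝕜] [SecondCountableTopology 𝕜]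
    [NormedAddCommGroup E] [NormedSpace 𝕜 E] {f : 𝕜 → E} {U : Set 𝕜}
    (hf : AnalyticOnNhd 𝕜 f U) (hU : IsPreconnected U)
    (hzeros : ¬ ({z | f z = 0} ∩ U).Countable) : EqOn f 0 U := by
  refine (hf.eqOn_zero_or_eventually_ne_zero_of_preconnected hU).resolve_right fun h => hzeros ?_
  exact (HereditarilyLindelofSpace.isLindelof _).countable_of_isDiscrete
    (isDiscrete_of_codiscreteWithin h)

theorem Complex.linearIndependent_exp_mul :
    LinearIndependent ℂ (fun a : ℂ => fun z : ℂ => exp (a * z)) := by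
  let χ : ℂ → Multiplicative ℂ →* ℂ := fun a =>
    expMonoidHom.comp (AddMonoidHom.toMultiplicative (AddMonoidHom.mulLeft a))
  have hderiv (a : ℂ) : HasDerivAt (fun z => exp (a * z)) a 0 := by
    simpa using ((hasDerivAt_id (0 : ℂ)).const_mul a).cexp
  have hχ : Injective χ := fun a b hab => by
    have hfun : (fun z => exp (a * z)) = fun z => exp (b * z) := DFunLike.coe_fn_eq.mpr hab
    exact (hderiv a).unique (hfun ▸ hderiv b)
  exact (linearIndependent_monoidHom (Multiplicative ℂ) ℂ).comp χ hχ

theorem LinearIndependent.sum_nsmul_injective {R M ι : Type*} [Semiring R] [CharZero R]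
    [AddCommMonoid M] [Module R M] [Fintype ι] {v : ι → M} (hv : LinearIndependent R v) :
    Injective (fun d : ι →₀ ℕ => ∑ i, d i • v i) := by
  intro d e hde
  have hcast := Fintype.linearIndependent_iffₛ.mp hv (fun i => (d i : R)) (fun i => (e i : R))
    (by simpa only [Nat.cast_smul_eq_nsmul] using hde)
  ext i
  exact_mod_cast hcast i

theorem MvPolynomial.eval_exp_mul {σ : Type*} [Fintype σ] (r : σ → ℂ) (P : MvPolynomial σ ℂ)
    (z : ℂ) :
    eval (fun i => exp (r i * z)) P = ∑ d ∈ P.support, P.coeff d * exp ((∑ i, d i • r i) * z) := by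
  rw [eval_eq']
  refine Finset.sum_congr rfl fun d _ => ?_
  simp only [← exp_nat_mul, ← exp_sum, nsmul_eq_mul, Finset.sum_mul, mul_assoc]

theorem Complex.sum_exp_mul_eq_zero_of_not_countable {ι : Type*} {s : Finset ι} {c a : ι → ℂ}
    (ha : Injective a) {Z : Set ℂ} (hZ : ¬ Z.Countable)
    (hvanish : ∀ z ∈ Z, ∑ i ∈ s, c i * exp (a i * z) = 0) : ∀ i ∈ s, c i = 0 := by
  set g : ℂ → ℂ := fun z => ∑ i ∈ s, c i * exp (a i * z)
  have hg : AnalyticOnNhd ℂ g univ :=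
    (Differentiable.fun_sum fun i _ => (differentiable_const _).mul
      ((differentiable_const _).mul differentiable_id).cexp).differentiableOn.analyticOnNhd
      isOpen_univ
  have hzeros : ¬ ({z | g z = 0} ∩ univ).Countable := fun h =>
    hZ (h.mono fun z hz => mem_inter (hvanish z hz) (mem_univ z))
  have hg0 : g = 0 := funext fun z =>
    hg.eqOn_zero_of_preconnected_of_not_countable isPreconnected_univ hzeros (mem_univ z)
  refine linearIndependent_iff'.mp (linearIndependent_exp_mul.comp a ha) s c ?_
  simpa [_root_.funext_iff, Finset.sum_apply] using congrFun hg0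

theorem mv_poly_of_exponentials_not_identically_zero_general
    (Ω : Type*) (f : Ω → ℂ) (hunc : ¬ (Set.range f).Countable)
    (N : ℕ) (r : Fin N → ℝ)
    (hind : LinearIndependent ℚ r)
    (P : MvPolynomial (Fin N) ℂ) (hP : P ≠ 0) :
    ∃ x : Ω, MvPolynomial.eval (fun i => Complex.exp ((r i : ℂ) * f x)) P ≠ 0 := by
  by_contra! hzero
  have hfreqs : Injective (fun d : Fin N →₀ ℕ => ∑ i, d i • (r i : ℂ)) := by
    simpa [Function.comp_def] using ofReal_injective.comp hind.sum_nsmul_injective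
  obtain ⟨d, hd⟩ := support_nonempty.mpr hP
  refine mem_support_iff.mp hd (sum_exp_mul_eq_zero_of_not_countable hfreqs hunc ?_ d hd)
  rintro _ ⟨x, rfl⟩
  exact (eval_exp_mul (fun i => (r i : ℂ)) P (f x)).symm.trans (hzero x)

/-- Let `Ω` be nonempty, `f : Ω → ℂ` with uncountable range,
let `r₁ > ⋯ > r_N` be positive reals linearly independent over `ℚ`, and let `P`
be a nonzero polynomial in `N` complex variables without constant term.  Then
`x ↦ P(e^{r₁ f(x)},…,e^{r_N f(x)})` is not identically zero on `Ω`. -/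
theorem mv_poly_of_exponentials_not_identically_zero
    (Ω : Type*) [Nonempty Ω] (f : Ω → ℂ) (hunc : ¬ (Set.range f).Countable)
    (N : ℕ) (r : Fin N → ℝ) (hpos : ∀ i, 0 < r i) (hanti : StrictAnti r)
    (hind : LinearIndependent ℚ r)
    (P : MvPolynomial (Fin N) ℂ) (hP : P ≠ 0) (hP0 : MvPolynomial.constantCoeff P = 0) :
    ∃ x : Ω, MvPolynomial.eval (fun i => Complex.exp ((r i : ℂ) * f x)) P ≠ 0 :=
  mv_poly_of_exponentials_not_identically_zero_general Ω f hunc N r hind P hP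
end

section
/- Let X be a T1, perfect, second countable topological space and let (x_n)_{n≥1} be a dense sequence in X. Then one can extract countably many pairwise disjoint subsequences (x_{n(k,j)})_{j≥1}, k = 1,2,..., such that each subsequence consists of distinct points and each is dense in X. -/
/-!
Enumerate a countable base of nonempty open sets as `W 0, W 1, …` and run through the pairs
`(k, m)` along `Nat.pair`. Choose indices `g 0 < g 1 < ⋯` greedily so that `x (g t)` lies in the
basic set `W m` coded by `t = Nat.pair k m` and differs from every earlier term `x i`, `i ≤ g (t-1)`.
This is always possible because in a T1 space without isolated points a dense set stays dense after
removing finitely many points. The `k`-th subsequence `j ↦ x (g (Nat.pair k j))` then meets every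
`W m`, and distinct `k` use disjoint sets of indices with pairwise distinct values.
-/

open Set Function Filter Topology

theorem DenseRange.exists_mem_open_notMem_finite {X ι : Type*} [TopologicalSpace X] [T1Space X]
    [∀ x : X, NeBot (𝓝[≠] x)] {x : ι → X} (hx : DenseRange x) {U : Set X} (hU : IsOpen U)
    (hne : U.Nonempty) {F : Set X} (hF : F.Finite) : ∃ i, x i ∈ U ∧ x i ∉ F := by
  obtain ⟨_, ⟨⟨i, rfl⟩, hiF⟩, hiU⟩ := (hx.sdiff_finite hF).exists_mem_open hU hne
  exact ⟨i, hiU, hiF⟩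

theorem TopologicalSpace.exists_seq_nonempty_open_forall_subset (X : Type*) [TopologicalSpace X]
    [SecondCountableTopology X] [Nonempty X] :
    ∃ W : ℕ → Set X, (∀ m, IsOpen (W m) ∧ (W m).Nonempty) ∧
      ∀ U, IsOpen U → U.Nonempty → ∃ m, W m ⊆ U := by
  obtain ⟨b, hbc, hbne, hb⟩ := exists_countable_basis X
  obtain ⟨v, hv, -⟩ :=
    hb.exists_subset_of_mem_open (mem_univ (Classical.arbitrary X)) isOpen_univ
  obtain ⟨W, rfl⟩ := hbc.exists_eq_range ⟨v, hv⟩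
  refine ⟨W, fun m => ⟨hb.isOpen ⟨m, rfl⟩, nonempty_iff_ne_empty.2 ?_⟩, ?_⟩
  · exact fun h => hbne (h ▸ ⟨m, rfl⟩)
  · rintro U hU ⟨u, hu⟩
    obtain ⟨_, ⟨m, rfl⟩, -, hmU⟩ := hb.exists_subset_of_mem_open hu hU
    exact ⟨m, hmU⟩

theorem denseRange_of_mem_of_forall_exists_subset {X : Type*} [TopologicalSpace X]
    {W : ℕ → Set X} (hW : ∀ U, IsOpen U → U.Nonempty → ∃ m, W m ⊆ U) {f : ℕ → X}
    (hf : ∀ m, f m ∈ W m) : DenseRange f := by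
  refine dense_iff_inter_open.2 fun U hU hne => ?_
  obtain ⟨m, hm⟩ := hW U hU hne
  exact ⟨f m, hm (hf m), m, rfl⟩

theorem exists_strictMono_injective_comp_mem {α : Type*} (x : ℕ → α) (V : ℕ → Set α)
    (h : ∀ t m, ∃ i, x i ∈ V t ∧ x i ∉ x '' Iic m) :
    ∃ g : ℕ → ℕ, StrictMono g ∧ Injective (x ∘ g) ∧ ∀ t, x (g t) ∈ V t := by
  choose pick hpick_mem hpick_fresh using h
  let g : ℕ → ℕ := fun t => Nat.rec (pick 0 0) (fun t i => pick (t + 1) i) t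
  have hfresh : ∀ t, x (g (t + 1)) ∉ x '' Iic (g t) := fun t => hpick_fresh (t + 1) (g t)
  have hg : StrictMono g :=
    strictMono_nat_of_lt_succ fun t => not_le.1 fun hle => hfresh t ⟨_, hle, rfl⟩
  refine ⟨g, hg, Injective.of_lt_imp_ne fun s t hst heq => ?_, fun t => ?_⟩
  · cases t with
    | zero => omega
    | succ t => exact hfresh t ⟨g s, hg.monotone (Nat.lt_succ_iff.1 hst), heq⟩
  · cases t with
    | zero => exact hpick_mem 0 0
    | succ t => exact hpick_mem (t + 1) (g t)

theorem disjoint_range_comp_pair {α : Type*} {f : ℕ → α} (hf : Injective f) {k k' : ℕ}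
    (hk : k ≠ k') :
    Disjoint (range fun j => f (Nat.pair k j)) (range fun j => f (Nat.pair k' j)) := by
  rw [disjoint_left]
  rintro _ ⟨j, rfl⟩ ⟨j', hj'⟩
  exact hk (Nat.pair_eq_pair.1 (hf hj')).1.symm

/-- In a T1, perfect, second countable topological space, from every
dense sequence `(x_n)` one can extract countably many pairwise disjoint
subsequences, each consisting of distinct points and each dense in `X`. -/
theorem extract_countably_many_disjoint_dense_subsequences
    (X : Type*) [TopologicalSpace X] [T1Space X]
    [SecondCountableTopology X]
    (hperf : ∀ x : X, Filter.NeBot (nhdsWithin x {x}ᶜ))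
    (x : ℕ → X) (hx : DenseRange x) :
    ∃ n : ℕ → ℕ → ℕ,
      (∀ k, StrictMono (n k)) ∧
      (∀ k, Function.Injective (fun j => x (n k j))) ∧
      (∀ k, DenseRange (fun j => x (n k j))) ∧
      (∀ k k', k ≠ k' →
        Disjoint (Set.range (n k)) (Set.range (n k')) ∧
        Disjoint (Set.range (fun j => x (n k j))) (Set.range (fun j => x (n k' j)))) := by
  have := hperf
  have : Nonempty X := ⟨x 0⟩
  obtain ⟨W, hW, hW_subset⟩ := TopologicalSpace.exists_seq_nonempty_open_forall_subset X
  obtain ⟨g, hg, hxg, hgW⟩ := exists_strictMono_injective_comp_mem x (fun t => W t.unpair.2)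
    fun t m => hx.exists_mem_open_notMem_finite (hW _).1 (hW _).2 ((finite_Iic m).image x)
  refine ⟨fun k j => g (Nat.pair k j), fun k => hg.comp fun _ _ => Nat.pair_lt_pair_right k,
    fun k => hxg.comp fun _ _ h => (Nat.pair_eq_pair.1 h).2, fun k => ?_,
    fun k k' hk => ⟨disjoint_range_comp_pair hg.injective hk, disjoint_range_comp_pair hxg hk⟩⟩
  refine denseRange_of_mem_of_forall_exists_subset hW_subset fun m => ?_
  simpa using hgW (Nat.pair k m)
end

section
/- Let X be a topological vector space, α a cardinal, and A ⊆ X an α-lineable subset. Suppose there exists a dense-lineable subset B ⊆ X with A + B ⊆ A, and X has an open basis of cardinality at most α. Then A is dense-lineable; if moreover A ∩ B = ∅, then A ∪ {0} contains a dense vector subspace D with dim(D) = α. -/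
/-!
Take a basis `(uᵢ)_{i ∈ ι}` of an `α`-dimensional subspace inside `A ∪ {0}`. Since there are at
most `α` basic open sets, each nonempty basic open set `U` can be assigned its own index `i`, and
by density of the subspace `M_B` one can pick `vᵢ ∈ M_B` with `uᵢ + vᵢ ∈ U`; for the remaining
indices `vᵢ = 0`. The span `D` of the `uᵢ + vᵢ` is then dense. A nonzero vector of `D` is
`a + b` with `a ≠ 0` in the span of the `uᵢ` and `b` in `M_B`, so it lies in `A + B ⊆ A`, or in
`A` if `b = 0`. When `A ∩ B = ∅`, the spans of the `uᵢ` and of the `vᵢ` meet only in `0`, which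
makes the `uᵢ + vᵢ` linearly independent, so `dim D = α`.
-/

open Set Submodule TopologicalSpace Pointwise

universe u

theorem Dense.exists_add_mem {X : Type*} [AddGroup X] [TopologicalSpace X] [ContinuousAdd X]
    {S U : Set X} (hS : Dense S) (hU : IsOpen U) (hUne : U.Nonempty) (x : X) :
    ∃ s ∈ S, x + s ∈ U := by
  obtain ⟨y, hy⟩ := hUne
  exact hS.exists_mem_open (hU.preimage (continuous_const_add x))
    ⟨-x + y, show x + (-x + y) ∈ U by rwa [add_neg_cancel_left]⟩

theorem TopologicalSpace.IsTopologicalBasis.exists_dense_range_add {X ι : Type u} [AddGroup X]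
    [TopologicalSpace X] [ContinuousAdd X] {𝓑 : Set (Set X)} (h𝓑 : IsTopologicalBasis 𝓑)
    (hcard : Cardinal.mk 𝓑 ≤ Cardinal.mk ι)
    {S : Set X} (hS : Dense S) (h0 : (0 : X) ∈ S) (u : ι → X) :
    ∃ v : ι → X, (∀ i, v i ∈ S) ∧ Dense (range (u + v)) := by
  obtain ⟨f⟩ : Nonempty (↥(𝓑 \ {∅}) ↪ ι) :=
    (Cardinal.mk_le_mk_of_subset sdiff_subset).trans hcard
  have hw : ∀ U : ↥(𝓑 \ {∅}), ∃ s : S, u (f U) + s ∈ (U : Set X) := fun U ↦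
    let ⟨s, hs, hsU⟩ := hS.exists_add_mem (h𝓑.isOpen U.2.1) (nonempty_iff_ne_empty.2 U.2.2) _
    ⟨⟨s, hs⟩, hsU⟩
  choose w hw using hw
  let v : ι → S := Function.extend f w fun _ ↦ ⟨0, h0⟩
  refine ⟨fun i ↦ v i, fun i ↦ (v i).2, h𝓑.sdiff_empty.dense_iff.2 fun U hU _ ↦
    ⟨u (f ⟨U, hU⟩) + v (f ⟨U, hU⟩), ?_, mem_range_self _⟩⟩
  simpa [v, f.injective.extend_apply] using hw ⟨U, hU⟩

section Algebra

variable {R M ι : Type*} [Ring R] [AddCommGroup M] [Module R M]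

theorem Finsupp.linearCombination_add_family (u v : ι → M) :
    Finsupp.linearCombination R (u + v) =
      Finsupp.linearCombination R u + Finsupp.linearCombination R v := by
  ext c
  simp [Finsupp.linearCombination_apply, smul_add, Finsupp.sum_add]

theorem Finsupp.linearCombination_mem_span_range (v : ι → M) (c : ι →₀ R) :
    Finsupp.linearCombination R v c ∈ span R (range v) := by
  rw [← Finsupp.range_linearCombination]
  exact LinearMap.mem_range_self _ c

theorem LinearIndependent.add_of_disjoint_span {u v : ι → M} (hu : LinearIndependent R u)
    (huv : Disjoint (span R (range u)) (span R (range v))) : LinearIndependent R (u + v) := by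
  rw [linearIndependent_iff]
  intro c hc
  rw [Finsupp.linearCombination_add_family, LinearMap.add_apply, add_eq_zero_iff_eq_neg,
    ← map_neg] at hc
  refine linearIndependent_iff.1 hu c (disjoint_def.1 huv _ ?_ ?_)
  · exact Finsupp.linearCombination_mem_span_range u c
  · exact hc ▸ Finsupp.linearCombination_mem_span_range v (-c)

theorem Submodule.disjoint_of_sdiff_zero_subset {N N' : Submodule R M} {A B : Set M}
    (hA : (N : Set M) \ {0} ⊆ A) (hB : (N' : Set M) \ {0} ⊆ B) (hAB : Disjoint A B) :
    Disjoint N N' :=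
  disjoint_def.2 fun _ hxN hxN' ↦ by_contra fun hx0 ↦
    hAB.ne_of_mem (hA ⟨hxN, hx0⟩) (hB ⟨hxN', hx0⟩) rfl

theorem span_range_add_sdiff_zero_subset {u v : ι → M} {A B : Set M}
    (hu : LinearIndependent R u) (hA : (span R (range u) : Set M) \ {0} ⊆ A)
    (hB : (span R (range v) : Set M) \ {0} ⊆ B) (hAB : A + B ⊆ A) :
    (span R (range (u + v)) : Set M) \ {0} ⊆ A := by
  rintro x ⟨hx, hx0⟩
  rw [SetLike.mem_coe, ← Finsupp.range_linearCombination] at hx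
  obtain ⟨c, rfl⟩ := hx
  have hc : c ≠ 0 := by rintro rfl; exact hx0 (map_zero _)
  have ha : Finsupp.linearCombination R u c ∈ A :=
    hA ⟨Finsupp.linearCombination_mem_span_range u c,
      fun h ↦ hc (linearIndependent_iff.1 hu c h)⟩
  rw [Finsupp.linearCombination_add_family, LinearMap.add_apply]
  by_cases hb : Finsupp.linearCombination R v c = 0
  · rwa [hb, add_zero]
  · exact hAB (add_mem_add ha (hB ⟨Finsupp.linearCombination_mem_span_range v c, hb⟩))

end Algebra

theorem dense_lineability_criterion_general
    (X : Type*) [AddCommGroup X] [Module ℂ X] [TopologicalSpace X]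
    [IsTopologicalAddGroup X]
    (α : Cardinal) (A B : Set X)
    (hA : ∃ M : Submodule ℂ X, Module.rank ℂ M = α ∧ (M : Set X) \ {0} ⊆ A)
    (hB : ∃ M : Submodule ℂ X, Dense (M : Set X) ∧ (M : Set X) \ {0} ⊆ B)
    (hAB : A + B ⊆ A)
    (hbasis : ∃ 𝓑 : Set (Set X), TopologicalSpace.IsTopologicalBasis 𝓑 ∧ Cardinal.mk 𝓑 ≤ α) :
    (∃ D : Submodule ℂ X, Dense (D : Set X) ∧ (D : Set X) \ {0} ⊆ A) ∧
    (A ∩ B = ∅ →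
      ∃ D : Submodule ℂ X, Dense (D : Set X) ∧ (D : Set X) \ {0} ⊆ A ∧
        Module.rank ℂ D = α) := by
  obtain ⟨MA, hMA_rank, hMA⟩ := hA
  obtain ⟨MB, hMB_dense, hMB⟩ := hB
  obtain ⟨𝓑, h𝓑, h𝓑_card⟩ := hbasis
  let b := Module.Basis.ofVectorSpace ℂ MA
  have hι : Cardinal.mk (Module.Basis.ofVectorSpaceIndex ℂ MA) = α := by
    rw [b.mk_eq_rank'', hMA_rank]
  obtain ⟨v, hvMB, hdense⟩ := h𝓑.exists_dense_range_add (hι ▸ h𝓑_card)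
    hMB_dense MB.zero_mem (MA.subtype ∘ b)
  have hu : LinearIndependent ℂ (MA.subtype ∘ b) := b.linearIndependent.map' _ MA.ker_subtype
  have hspan_u : (span ℂ (range (MA.subtype ∘ b)) : Set X) \ {0} ⊆ A :=
    (sdiff_subset_sdiff_left (span_le.2 (range_subset_iff.2 fun i ↦ (b i).2))).trans hMA
  have hspan_v : (span ℂ (range v) : Set X) \ {0} ⊆ B :=
    (sdiff_subset_sdiff_left (span_le.2 (range_subset_iff.2 hvMB))).trans hMB
  have hDA := span_range_add_sdiff_zero_subset hu hspan_u hspan_v hAB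
  have hD_dense : Dense (span ℂ (range (MA.subtype ∘ b + v)) : Set X) :=
    hdense.mono subset_span
  refine ⟨⟨_, hD_dense, hDA⟩, fun hAB_disj ↦ ⟨_, hD_dense, hDA, ?_⟩⟩
  have hli := hu.add_of_disjoint_span
    (disjoint_of_sdiff_zero_subset hspan_u hspan_v (disjoint_iff_inter_eq_empty.2 hAB_disj))
  rw [rank_span hli, Cardinal.mk_range_eq _ hli.injective, hι]

/-- dense-lineability criterion: Let `X` be a topological vector
space, `α` a cardinal, `A ⊆ X` an `α`-lineable set.  If there is a dense-lineable
`B ⊆ X` with `A + B ⊆ A` and `X` has an open basis of cardinality `≤ α`, then `A`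
is dense-lineable; if moreover `A ∩ B = ∅`, then `A ∪ {0}` contains a dense vector
subspace of dimension `α`. -/
theorem dense_lineability_criterion
    (X : Type*) [AddCommGroup X] [Module ℂ X] [TopologicalSpace X]
    [IsTopologicalAddGroup X] [ContinuousSMul ℂ X]
    (α : Cardinal) (A B : Set X)
    (hA : ∃ M : Submodule ℂ X, Module.rank ℂ M = α ∧ (M : Set X) \ {0} ⊆ A)
    (hB : ∃ M : Submodule ℂ X, Dense (M : Set X) ∧ (M : Set X) \ {0} ⊆ B)
    (hAB : A + B ⊆ A)
    (hbasis : ∃ 𝓑 : Set (Set X), TopologicalSpace.IsTopologicalBasis 𝓑 ∧ Cardinal.mk 𝓑 ≤ α) :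
    (∃ D : Submodule ℂ X, Dense (D : Set X) ∧ (D : Set X) \ {0} ⊆ A) ∧
    (A ∩ B = ∅ →
      ∃ D : Submodule ℂ X, Dense (D : Set X) ∧ (D : Set X) \ {0} ⊆ A ∧
        Module.rank ℂ D = α) :=
  dense_lineability_criterion_general X α A B hA hB hAB hbasis
end

section
/- For a domain G ⊆ ℂ and f ∈ H(G), f is holomorphic exactly on G (i.e., f ∈ H_e(G)) if and only if for every a ∈ G the radius of convergence of the Taylor series of f centered at a equals dist(a, ∂G). -/
/-- A domain in `ℂ`: a nonempty connected open set (here, as in the paper,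
also a proper subset of `ℂ`). -/
def IsDomain' (G : Set ℂ) : Prop := IsOpen G ∧ IsConnected G ∧ G ≠ Set.univ

/-- `f` is holomorphic exactly on `G` (i.e. `f ∈ H_e(G)`): there are no domains
`G₁, G₂` with `G₂ ⊆ G ∩ G₁`, `G₁ ⊄ G`, and a holomorphic function on `G₁`
agreeing with `f` on `G₂`. -/
def HolExact (G : Set ℂ) (f : ℂ → ℂ) : Prop :=
  ¬ ∃ (G₁ G₂ : Set ℂ) (g : ℂ → ℂ),
      IsOpen G₁ ∧ IsConnected G₁ ∧ IsOpen G₂ ∧ IsConnected G₂ ∧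
      G₂ ⊆ G ∩ G₁ ∧ ¬ G₁ ⊆ G ∧ DifferentiableOn ℂ g G₁ ∧ Set.EqOn g f G₂

/-- The radius of convergence `ρ(f,a)` of the Taylor series of `f` at `a`. -/
noncomputable def taylorRadius (f : ℂ → ℂ) (a : ℂ) : ENNReal :=
  FormalMultilinearSeries.radius
    (fun n => ContinuousMultilinearMap.mkPiRing ℂ (Fin n)
      (iteratedDeriv n f a / n.factorial) : FormalMultilinearSeries ℂ ℂ ℂ)

/-!
The Taylor series of `f` at `a ∈ G` always converges on the largest disc about `a` avoiding
`∂G`, since that disc lies in `G`. If it converges on a larger disc, its sum continues `f` across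
a boundary point, so `f` is not exact. Conversely, if `g ∈ H(G₁)` agrees with `f` on `G₂`, the
identity theorem gives `f = g` on the component `C` of `G ∩ G₁` containing `G₂`; since `G₁`
leaves `G`, it contains a point `c ∈ ∂C ∩ ∂G`, and at points of `C` close to `c` the Taylor
radius of `f = g` exceeds the distance to `c`, hence to `∂G`.
-/

open Set Metric Topology
open scoped ENNReal

lemma closure_connectedComponentIn_inter_subset {X : Type*} [TopologicalSpace X]
    [LocallyConnectedSpace X] {U : Set X} (hU : IsOpen U) (x : X) :
    closure (connectedComponentIn U x) ∩ U ⊆ connectedComponentIn U x := by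
  rintro c ⟨hcl, hcU⟩
  obtain ⟨q, hqc, hqx⟩ := mem_closure_iff.1 hcl _ hU.connectedComponentIn
    (mem_connectedComponentIn hcU)
  rw [connectedComponentIn_eq hqx, ← connectedComponentIn_eq hqc]
  exact mem_connectedComponentIn hcU

lemma eball_infEDist_frontier_subset {E : Type*} [NormedAddCommGroup E] [NormedSpace ℝ E]
    {G : Set E} (hG : IsOpen G) {a : E} (ha : a ∈ G) :
    eball a (infEDist a (frontier G)) ⊆ G := by
  intro z hz
  refine (convex_eball a _).isPreconnected.subset_of_closure_inter_subset hG
    ⟨a, mem_eball_self (pos_of_gt hz), ha⟩ ?_ hz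
  rintro y ⟨hyG, hy⟩
  by_contra hy'
  have hyfr : y ∈ frontier G := by rw [hG.frontier_eq]; exact ⟨hyG, hy'⟩
  exact (infEDist_le_edist_of_mem hyfr).not_gt (mem_eball'.1 hy)

section taylorRadius

variable {f g : ℂ → ℂ} {a : ℂ}

theorem HasFPowerSeriesAt.taylorRadius_eq {p : FormalMultilinearSeries ℂ ℂ ℂ}
    (hp : HasFPowerSeriesAt f p a) : taylorRadius f a = p.radius := by
  have hcoeff (n : ℕ) : p.coeff n = iteratedDeriv n f a / n.factorial := by
    rw [hp.eq_formalMultilinearSeries (AnalyticAt.hasFPowerSeriesAt ⟨p, hp⟩),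
      FormalMultilinearSeries.coeff_ofScalars]
  simp only [taylorRadius, ← hcoeff, FormalMultilinearSeries.mkPiRing_coeff_eq]

theorem Filter.EventuallyEq.taylorRadius_eq (h : f =ᶠ[𝓝 a] g) :
    taylorRadius f a = taylorRadius g a := by
  simp only [taylorRadius, h.iteratedDeriv_eq]

theorem le_taylorRadius_of_differentiableOn {r : ℝ≥0∞}
    (hf : DifferentiableOn ℂ f (eball a r)) : r ≤ taylorRadius f a := by
  refine ENNReal.le_of_forall_nnreal_lt fun R hR => ?_
  rcases eq_zero_or_pos R with rfl | hR0
  · simp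
  have hsub : closedBall a R ⊆ eball a r := fun z hz =>
    (edist_le_coe.2 (mem_closedBall.1 hz)).trans_lt hR
  have hp := (hf.mono hsub).hasFPowerSeriesOnBall hR0
  exact hp.hasFPowerSeriesAt.taylorRadius_eq ▸ hp.r_le

theorem infEDist_frontier_le_taylorRadius {G : Set ℂ} (hG : IsOpen G)
    (hf : DifferentiableOn ℂ f G) (ha : a ∈ G) : infEDist a (frontier G) ≤ taylorRadius f a :=
  le_taylorRadius_of_differentiableOn (hf.mono (eball_infEDist_frontier_subset hG ha))

end taylorRadius

section holExact

variable {G : Set ℂ} {f : ℂ → ℂ}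

theorem not_holExact_of_infEDist_frontier_lt_taylorRadius (hG : IsOpen G)
    (hf : DifferentiableOn ℂ f G) {a : ℂ} (ha : a ∈ G)
    (hlt : infEDist a (frontier G) < taylorRadius f a) : ¬ HolExact G f := by
  obtain ⟨p, hp⟩ := hf.analyticAt (hG.mem_nhds ha)
  rw [hp.taylorRadius_eq] at hlt
  have hr : 0 < p.radius := pos_of_gt hlt
  obtain ⟨x, hxG, hxa⟩ := infEDist_lt_iff.1 hlt
  -- the sum of the Taylor series of `f` at `a` continues `f` to its whole disc of convergence
  set g : ℂ → ℂ := fun z => p.sum (z - a)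
  have hg : HasFPowerSeriesOnBall g p a p.radius := by
    simpa only [zero_add] using (p.hasFPowerSeriesOnBall hr).comp_sub a
  have hgf : ∀ᶠ z in 𝓝 a, g z = f z := by
    have h0 := hg.hasFPowerSeriesAt.sub hp
    rw [sub_self] at h0
    filter_upwards [h0.eventually_eq_zero] with z hz using sub_eq_zero.1 hz
  obtain ⟨ε, hε, hball⟩ := Metric.mem_nhds_iff.1
    ((hgf.and (hG.mem_nhds ha)).and (isOpen_eball.mem_nhds (mem_eball_self hr)))
  intro hexact
  refine hexact ⟨eball a p.radius, ball a ε, g, isOpen_eball,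
    (convex_eball a _).isConnected ⟨a, mem_eball_self hr⟩, isOpen_ball,
    (convex_ball a ε).isConnected ⟨a, mem_ball_self hε⟩,
    fun z hz => ⟨(hball hz).1.2, (hball hz).2⟩, fun hsub => ?_, hg.differentiableOn,
    fun z hz => (hball hz).1.1⟩
  rw [hG.frontier_eq] at hxG
  exact hxG.2 (hsub (mem_eball'.2 hxa))

theorem exists_infEDist_frontier_lt_taylorRadius_of_not_holExact (hG : IsOpen G)
    (hf : DifferentiableOn ℂ f G) (h : ¬ HolExact G f) :
    ∃ q ∈ G, infEDist q (frontier G) < taylorRadius f q := by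
  obtain ⟨G₁, G₂, g, hG₁, hG₁c, hG₂, hG₂c, hG₂sub, hG₁G, hg, hgf⟩ := not_not.1 h
  obtain ⟨x, hx⟩ := hG₂c.nonempty
  set C := connectedComponentIn (G ∩ G₁) x
  have hC : IsOpen C := (hG.inter hG₁).connectedComponentIn
  have hCsub : C ⊆ G ∩ G₁ := connectedComponentIn_subset _ _
  have hxC : x ∈ C := mem_connectedComponentIn (hG₂sub hx)
  have hfg : EqOn f g C :=
    ((hf.mono fun z hz => (hCsub hz).1).analyticOnNhd hC).eqOn_of_preconnected_of_eventuallyEq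
      ((hg.mono fun z hz => (hCsub hz).2).analyticOnNhd hC) isPreconnected_connectedComponentIn
      hxC (Filter.mem_of_superset (hG₂.mem_nhds hx) fun z hz => (hgf hz).symm)
  -- `G₁` leaves `C`, so it meets the closure of `C` outside `G`: a boundary point of `G`
  obtain ⟨c, ⟨hcC, hcG₁⟩, hcG⟩ : ∃ c ∈ closure C ∩ G₁, c ∉ G := by
    by_contra! hno
    refine hG₁G ((hG₁c.isPreconnected.subset_of_closure_inter_subset hC
      ⟨x, (hCsub hxC).2, hxC⟩ fun c hc => ?_).trans fun z hz => (hCsub hz).1)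
    exact closure_connectedComponentIn_inter_subset (hG.inter hG₁) x ⟨hc.1, hno c hc, hc.2⟩
  have hcfr : c ∈ frontier G := by
    rw [hG.frontier_eq]
    exact ⟨closure_mono (fun z hz => (hCsub hz).1) hcC, hcG⟩
  obtain ⟨δ, hδ, hδG₁⟩ := Metric.isOpen_iff.1 hG₁ c hcG₁
  obtain ⟨q, hqC, hqc⟩ := Metric.mem_closure_iff.1 hcC (δ / 2) (half_pos hδ)
  have hqδ : ball q (δ / 2) ⊆ G₁ := fun z hz => hδG₁ <| by
    rw [mem_ball] at hz ⊢
    linarith [dist_triangle z q c, dist_comm c q]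
  refine ⟨q, (hCsub hqC).1, ?_⟩
  calc infEDist q (frontier G) ≤ edist q c := infEDist_le_edist_of_mem hcfr
    _ < ENNReal.ofReal (δ / 2) := by rw [edist_comm, edist_lt_ofReal]; exact hqc
    _ ≤ taylorRadius g q := by
      rw [← eball_ofReal] at hqδ
      exact le_taylorRadius_of_differentiableOn (hg.mono hqδ)
    _ = taylorRadius f q := (hfg.eventuallyEq_of_mem (hC.mem_nhds hqC)).taylorRadius_eq.symm

theorem holExact_iff_forall_taylorRadius_le (hG : IsOpen G) (hf : DifferentiableOn ℂ f G) :
    HolExact G f ↔ ∀ a ∈ G, taylorRadius f a ≤ infEDist a (frontier G) := by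
  refine ⟨fun h a ha => not_lt.1 fun hlt =>
    not_holExact_of_infEDist_frontier_lt_taylorRadius hG hf ha hlt h, fun h => ?_⟩
  by_contra hn
  obtain ⟨q, hq, hlt⟩ := exists_infEDist_frontier_lt_taylorRadius_of_not_holExact hG hf hn
  exact (h q hq).not_gt hlt

end holExact

/-- For a domain `G ⊆ ℂ` and `f` holomorphic on `G`, `f ∈ H_e(G)`
iff for every `a ∈ G` the radius of convergence of the Taylor series of `f` at
`a` equals `dist(a, ∂G)`. -/
theorem holExact_iff_taylorRadius_eq_dist_boundary
    (G : Set ℂ) (hG : IsDomain' G) (f : ℂ → ℂ) (hf : DifferentiableOn ℂ f G) :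
    HolExact G f ↔ ∀ a ∈ G, taylorRadius f a = EMetric.infEdist a (frontier G) := by
  rw [holExact_iff_forall_taylorRadius_le hG.1 hf]
  exact forall₂_congr fun a ha =>
    ⟨fun h => h.antisymm (infEDist_frontier_le_taylorRadius hG.1 hf ha), le_of_eq⟩
end

section
/- Let G ⊆ ℂ be a domain whose boundary ∂G has no isolated points, let f ∈ H_{we}(G) ∩ A¹(G), and let φ be a nonconstant entire function. Then φ ∘ f ∈ H_{we}(G). -/
/-- `f ∈ H_{we}(G)`: `f` is holomorphic on `G` and has no holomorphic extension
to any domain strictly containing `G`. -/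
def HolWeakExact (G : Set ℂ) (f : ℂ → ℂ) : Prop :=
  DifferentiableOn ℂ f G ∧
  ¬ ∃ (G₁ : Set ℂ) (g : ℂ → ℂ),
      IsOpen G₁ ∧ IsConnected G₁ ∧ G ⊆ G₁ ∧ G ≠ G₁ ∧
      DifferentiableOn ℂ g G₁ ∧ Set.EqOn g f G

/-!
Suppose `g` is holomorphic on a domain `G₁ ⊋ G` and `g = φ ∘ f` on `G`. Then `G₁` contains
boundary points of `G`, where `g = φ ∘ f₀`. If `φ'(f₀ q) ≠ 0` at such a point `q`, a local
inverse `ψ` of `φ` near `f₀ q` makes `ψ ∘ g` a holomorphic extension of `f` across `q`,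
impossible for `f ∈ H_{we}(G)`. So `φ' ∘ f₀` vanishes on `∂G ∩ G₁`; since the zeros of `φ'`
are isolated and `f₀` is continuous, `f₀` is locally constant there, hence so is `g`. As `∂G`
has no isolated points, the identity theorem makes `g`, hence `φ ∘ f`, constant, and by the
open mapping theorem `f` would then be constant, which no function in `H_{we}(G)` is.
-/

open Set Filter Metric Topology

theorem IsPreconnected.exists_mem_frontier_of_not_subset {X : Type*} [TopologicalSpace X]
    {s u : Set X} (hs : IsPreconnected s) (hu : IsOpen u) (hsu : (s ∩ u).Nonempty)
    (hnot : ¬ s ⊆ u) : ∃ q ∈ frontier u, q ∈ s := by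
  by_contra! h
  refine hnot (hs.subset_of_closure_inter_subset hu hsu fun z ⟨hzc, hzs⟩ => ?_)
  by_contra hzu
  exact h z (hu.frontier_eq ▸ ⟨hzc, hzu⟩) hzs

theorem DifferentiableOn.piecewise_union_of_isOpen {𝕜 E F : Type*} [NontriviallyNormedField 𝕜]
    [NormedAddCommGroup E] [NormedSpace 𝕜 E] [NormedAddCommGroup F] [NormedSpace 𝕜 F]
    {s t : Set E} [∀ x, Decidable (x ∈ s)] {f g : E → F} (hs : IsOpen s) (ht : IsOpen t)
    (hf : DifferentiableOn 𝕜 f s) (hg : DifferentiableOn 𝕜 g t) (hfg : EqOn f g (s ∩ t)) :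
    DifferentiableOn 𝕜 (s.piecewise f g) (s ∪ t) := by
  have hpg : EqOn (s.piecewise f g) g t := fun z hz => by
    by_cases hzs : z ∈ s
    · rw [piecewise_eq_of_mem _ _ _ hzs, hfg ⟨hzs, hz⟩]
    · exact piecewise_eq_of_notMem _ _ _ hzs
  rintro z (hz | hz)
  · exact ((hf.differentiableAt (hs.mem_nhds hz)).congr_of_eventuallyEq
      (eventually_of_mem (hs.mem_nhds hz) (piecewise_eqOn s f g))).differentiableWithinAt
  · exact ((hg.differentiableAt (ht.mem_nhds hz)).congr_of_eventuallyEq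
      (eventually_of_mem (ht.mem_nhds hz) hpg)).differentiableWithinAt

theorem eventually_deriv_ne_zero_of_differentiable {φ : ℂ → ℂ} (hφ : Differentiable ℂ φ)
    (hφnc : ¬ ∃ c : ℂ, ∀ z, φ z = c) (w : ℂ) : ∀ᶠ y in 𝓝[≠] w, deriv φ y ≠ 0 := by
  have hφ' : AnalyticOnNhd ℂ (deriv φ) univ := (hφ.differentiableOn.analyticOnNhd isOpen_univ).deriv
  refine (hφ' w trivial).eventually_eq_zero_or_eventually_ne_zero.resolve_left fun h => hφnc ?_
  have hzero : ∀ x, deriv φ x = 0 := fun x =>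
    hφ'.eqOn_of_preconnected_of_eventuallyEq analyticOnNhd_const isPreconnected_univ
      (mem_univ w) h (mem_univ x)
  exact ⟨φ 0, fun z => is_const_of_deriv_eq_zero hφ hzero z 0⟩

theorem DifferentiableOn.exists_eq_const_of_comp_eq_const {G : Set ℂ} {f φ : ℂ → ℂ} {c : ℂ}
    (hf : DifferentiableOn ℂ f G) (hGopen : IsOpen G) (hGconn : IsConnected G)
    (hφ : Differentiable ℂ φ) (hφnc : ¬ ∃ c : ℂ, ∀ z, φ z = c) (hc : ∀ z ∈ G, φ (f z) = c) :
    ∃ c' : ℂ, ∀ z ∈ G, f z = c' := by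
  refine ((hf.analyticOnNhd hGopen).is_constant_or_isOpen hGconn.isPreconnected).resolve_right
    fun hopen => hφnc ⟨c, fun z => ?_⟩
  obtain ⟨z₀, hz₀⟩ := hGconn.nonempty
  have hφc : φ =ᶠ[𝓝 (f z₀)] fun _ => c := by
    refine eventually_of_mem ((hopen G subset_rfl hGopen).mem_nhds (mem_image_of_mem f hz₀)) ?_
    rintro _ ⟨z, hz, rfl⟩
    exact hc z hz
  exact (hφ.differentiableOn.analyticOnNhd isOpen_univ).eqOn_of_preconnected_of_eventuallyEq
    analyticOnNhd_const isPreconnected_univ (mem_univ _) hφc (mem_univ z)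

namespace HolWeakExact

variable {G : Set ℂ} {f : ℂ → ℂ}

theorem not_eq_const (hGne : G ≠ univ) (hf : HolWeakExact G f) : ¬ ∃ c : ℂ, ∀ z ∈ G, f z = c :=
  fun ⟨c, hc⟩ => hf.2 ⟨univ, fun _ => c, isOpen_univ, isConnected_univ, subset_univ G, hGne,
    differentiableOn_const c, fun z hz => (hc z hz).symm⟩

theorem not_eventuallyEq_of_analyticAt (hGopen : IsOpen G) (hGconn : IsConnected G)
    (hf : HolWeakExact G f) {q : ℂ} (hq : q ∈ frontier G) {F : ℂ → ℂ} (hF : AnalyticAt ℂ F q) :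
    ¬ F =ᶠ[𝓝[G] q] f := by
  classical
  intro hFf
  obtain ⟨δ, hδ, hball⟩ := eventually_nhds_iff_ball.1
    (hF.eventually_analyticAt.and (eventually_nhdsWithin_iff.1 hFf))
  have hqG : q ∉ G := (hGopen.frontier_eq ▸ hq).2
  have hmeet : (G ∩ ball q δ).Nonempty := by
    rw [inter_comm]
    exact mem_closure_iff.1 (frontier_subset_closure hq) _ isOpen_ball (mem_ball_self hδ)
  refine hf.2 ⟨G ∪ ball q δ, G.piecewise f F, hGopen.union isOpen_ball,
    hGconn.union hmeet (isConnected_ball hδ), subset_union_left,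
    fun h => hqG (h ▸ Or.inr (mem_ball_self hδ)), ?_, piecewise_eqOn G f F⟩
  exact hf.1.piecewise_union_of_isOpen hGopen isOpen_ball
    (fun z hz => (hball z hz).1.differentiableWithinAt) fun z hz => ((hball z hz.2).2 hz.1).symm

theorem deriv_eq_zero_of_comp_eventuallyEq (hGopen : IsOpen G) (hGconn : IsConnected G)
    (hf : HolWeakExact G f) {q w : ℂ} (hq : q ∈ frontier G) (hfq : Tendsto f (𝓝[G] q) (𝓝 w))
    {φ g : ℂ → ℂ} (hφ : AnalyticAt ℂ φ w) (hg : AnalyticAt ℂ g q) (hgf : g =ᶠ[𝓝[G] q] φ ∘ f) :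
    deriv φ w = 0 := by
  by_contra hw
  have : (𝓝[G] q).NeBot := mem_closure_iff_nhdsWithin_neBot.1 (frontier_subset_closure hq)
  have hgq : g q = φ w := tendsto_nhds_unique
    (hg.continuousAt.tendsto.mono_left nhdsWithin_le_nhds)
    ((hφ.continuousAt.tendsto.comp hfq).congr' hgf.symm)
  refine hf.not_eventuallyEq_of_analyticAt hGopen hGconn hq
    ((hφ.analyticAt_localInverse hw).comp_of_eq hg hgq) ?_
  filter_upwards [hgf, hfq.eventually (hφ.hasStrictDerivAt.eventually_left_inverse hw)]
    with z hgz hψz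
  rw [Function.comp_apply, hgz, Function.comp_apply, hψz]

end HolWeakExact

theorem comp_entire_holWeakExact_general
    (G : Set ℂ) (hGopen : IsOpen G) (hGconn : IsConnected G) (hGne : G ≠ Set.univ)
    (hperf : ∀ z ∈ frontier G, Filter.NeBot (nhdsWithin z (frontier G \ {z})))
    (f : ℂ → ℂ) (hf : HolWeakExact G f)
    (f₀ : ℂ → ℂ)
    (hf₀ : ContinuousOn f₀ (closure G)) (hf₀e : Set.EqOn f₀ f G)
    (φ : ℂ → ℂ) (hφ : Differentiable ℂ φ) (hφnc : ¬ ∃ c : ℂ, ∀ z, φ z = c) :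
    HolWeakExact G (φ ∘ f) := by
  refine ⟨hφ.comp_differentiableOn hf.1, ?_⟩
  rintro ⟨G₁, g, hG₁open, hG₁conn, hsub, hne, hg, hgf⟩
  have hga : AnalyticOnNhd ℂ g G₁ := hg.analyticOnNhd hG₁open
  have hbdry : EqOn g (φ ∘ f₀) (closure G ∩ G₁) :=
    EqOn.of_subset_closure (fun z hz => by simp [hgf hz, hf₀e hz])
      (hg.continuousOn.mono inter_subset_right)
      (hφ.continuous.comp_continuousOn (hf₀.mono inter_subset_left))
      (subset_inter subset_closure hsub) inter_subset_left
  have hcrit : ∀ q ∈ frontier G, q ∈ G₁ → deriv φ (f₀ q) = 0 := fun q hq hq₁ =>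
    hf.deriv_eq_zero_of_comp_eventuallyEq hGopen hGconn hq
      (((hf₀ q (frontier_subset_closure hq)).tendsto.mono_left
        (nhdsWithin_mono q subset_closure)).congr' (eventually_nhdsWithin_of_forall hf₀e))
      (hφ.analyticAt _) (hga q hq₁) (eventually_nhdsWithin_of_forall hgf)
  obtain ⟨p, hp, hp₁⟩ := hG₁conn.isPreconnected.exists_mem_frontier_of_not_subset hGopen
    (hGconn.nonempty.mono fun z hz => ⟨hsub hz, hz⟩) fun h => hne (hsub.antisymm h)
  have hiso : ∀ᶠ z in 𝓝[frontier G] p, f₀ z ≠ f₀ p → deriv φ (f₀ z) ≠ 0 :=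
    ((hf₀ p (frontier_subset_closure hp)).mono frontier_subset_closure).eventually
      (eventually_nhdsWithin_iff.1 (eventually_deriv_ne_zero_of_differentiable hφ hφnc (f₀ p)))
  have hgp : ∀ᶠ z in 𝓝[frontier G] p, g z = φ (f₀ p) := by
    filter_upwards [hiso, self_mem_nhdsWithin, nhdsWithin_le_nhds (hG₁open.mem_nhds hp₁)]
      with z hz hzG hz₁
    rw [hbdry ⟨frontier_subset_closure hzG, hz₁⟩, Function.comp_apply,
      show f₀ z = f₀ p from by_contra fun h => hz h (hcrit z hzG hz₁)]
  have hacc : (𝓝[frontier G \ {p}] p).NeBot := hperf p hp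
  have hgc : EqOn g (fun _ => φ (f₀ p)) G₁ :=
    hga.eqOn_of_preconnected_of_frequently_eq analyticOnNhd_const hG₁conn.isPreconnected hp₁
      (((hgp.filter_mono (nhdsWithin_mono p sdiff_subset)).frequently).filter_mono
        (nhdsWithin_mono p fun _ hz => hz.2))
  exact hf.not_eq_const hGne (hf.1.exists_eq_const_of_comp_eq_const hGopen hGconn hφ hφnc
    fun z hz => (hgf hz).symm.trans (hgc (hsub hz)))

/-- Let `G ⊆ ℂ` be a domain whose boundary has no isolated points,
let `f ∈ H_{we}(G) ∩ A¹(G)` (i.e. `f` and `f'` extend continuously to `Ḡ`), and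
let `φ` be a nonconstant entire function.  Then `φ ∘ f ∈ H_{we}(G)`. -/
theorem comp_entire_holWeakExact
    (G : Set ℂ) (hGopen : IsOpen G) (hGconn : IsConnected G) (hGne : G ≠ Set.univ)
    (hperf : ∀ z ∈ frontier G, Filter.NeBot (nhdsWithin z (frontier G \ {z})))
    (f : ℂ → ℂ) (hf : HolWeakExact G f)
    (f₀ f₁ : ℂ → ℂ)
    (hf₀ : ContinuousOn f₀ (closure G)) (hf₀e : Set.EqOn f₀ f G)
    (hf₁ : ContinuousOn f₁ (closure G)) (hf₁e : Set.EqOn f₁ (deriv f) G)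
    (φ : ℂ → ℂ) (hφ : Differentiable ℂ φ) (hφnc : ¬ ∃ c : ℂ, ∀ z, φ z = c) :
    HolWeakExact G (φ ∘ f) :=
  comp_entire_holWeakExact_general G hGopen hGconn hGne hperf f hf f₀ hf₀ hf₀e φ hφ hφnc
end

section
/- Let G ⊆ ℂ be a domain, (a_n)_{n≥1} a sequence in G with the property that for every a ∈ G and every r > dist(a, ∂G), the connected component of B(a,r) ∩ G containing a contains infinitely many of the a_n. If F ∈ H(G) satisfies |F(a_n)| → +∞ as n → ∞, then F ∈ H_e(G), i.e., F is holomorphic exactly on G. -/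
/-!
If `F` had a holomorphic continuation `g` to a connected open `G₁ ⊄ G`, then `F = g` on the
component `C` of `G ∩ G₁` meeting the region of agreement, and `C` has a boundary point `w` of `G`
inside `G₁`. Near `w`, `g` is bounded on a closed ball `B̄(p, ε) ⊆ G₁` with `p ∈ C` and
`dist(p, ∂G) < ε`; the component of `B(p, ε) ∩ G` at `p` lies in `C` and contains infinitely many
`a_n`, on which `|F(a_n)| = |g(a_n)|` stays bounded.
-/

open Set Filter Topology Metric

section Topology

variable {α : Type*} [TopologicalSpace α] [LocallyConnectedSpace α]

theorem mem_connectedComponentIn_of_mem_closure {s : Set α} {x y : α} (hs : IsOpen s)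
    (hxs : x ∈ s) (hx : x ∈ closure (connectedComponentIn s y)) :
    x ∈ connectedComponentIn s y := by
  obtain ⟨z, hzx, hzy⟩ := mem_closure_iff_nhds.mp hx _
    (connectedComponentIn_mem_nhds (hs.mem_nhds hxs))
  rw [connectedComponentIn_eq hzy, ← connectedComponentIn_eq hzx]
  exact mem_connectedComponentIn hxs

theorem exists_mem_closure_connectedComponentIn_inter_notMem {U V : Set α} {p : α}
    (hU : IsOpen U) (hV : IsOpen V) (hVc : IsPreconnected V) (hp : p ∈ U ∩ V)
    (hVU : ¬ V ⊆ U) :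
    ∃ w ∈ V, w ∈ closure (connectedComponentIn (U ∩ V) p) ∧ w ∉ U := by
  by_contra! h
  have hVC : V ⊆ connectedComponentIn (U ∩ V) p :=
    hVc.subset_of_closure_inter_subset (hU.inter hV).connectedComponentIn
      ⟨p, hp.2, mem_connectedComponentIn hp⟩
      fun x ⟨hxC, hxV⟩ => mem_connectedComponentIn_of_mem_closure (hU.inter hV)
        ⟨h x hxV hxC, hxV⟩ hxC
  exact hVU fun x hx => (connectedComponentIn_subset _ _ (hVC hx)).1

end Topology

theorem exists_closedBall_subset_of_mem_closure {X : Type*} [PseudoMetricSpace X]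
    {s t V : Set X} {w : X} (hws : w ∈ closure s) (hwt : w ∈ t) (hV : V ∈ 𝓝 w) :
    ∃ p ∈ s, ∃ ε, closedBall p ε ⊆ V ∧ infDist p t < ε := by
  obtain ⟨δ, hδ, hδV⟩ := Metric.mem_nhds_iff.mp hV
  obtain ⟨p, hps, hwp⟩ := Metric.mem_closure_iff.mp hws (δ / 2) (by positivity)
  refine ⟨p, hps, δ / 2, fun x hx => hδV ?_, ?_⟩
  · calc dist x w ≤ dist x p + dist p w := dist_triangle x p w
      _ < δ / 2 + δ / 2 := by
        rw [dist_comm p w]; exact add_lt_add_of_le_of_lt (mem_closedBall.mp hx) hwp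
      _ = δ := add_halves δ
  · calc infDist p t ≤ dist p w := infDist_le_dist_of_mem hwt
      _ < δ / 2 := by rwa [dist_comm]

theorem eqOn_connectedComponentIn_of_eventuallyEq {E : Type*} [NormedAddCommGroup E]
    [NormedSpace ℂ E] [CompleteSpace E] {f g : ℂ → E} {U : Set ℂ} {p : ℂ} (hU : IsOpen U)
    (hf : DifferentiableOn ℂ f U) (hg : DifferentiableOn ℂ g U) (hp : p ∈ U)
    (hfg : f =ᶠ[𝓝 p] g) : EqOn f g (connectedComponentIn U p) :=
  AnalyticOnNhd.eqOn_of_preconnected_of_eventuallyEq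
    ((hf.analyticOnNhd hU).mono (connectedComponentIn_subset U p))
    ((hg.analyticOnNhd hU).mono (connectedComponentIn_subset U p))
    isPreconnected_connectedComponentIn (mem_connectedComponentIn hp) hfg

theorem not_tendsto_norm_atTop_of_infinite_of_bounded {X E : Type*} [Norm E] {F : X → E}
    {a : ℕ → X} {K : Set X} {M : ℝ} (hK : {n | a n ∈ K}.Infinite) (hM : ∀ x ∈ K, ‖F x‖ ≤ M) :
    ¬ Tendsto (fun n => ‖F (a n)‖) atTop atTop := by
  intro hF
  obtain ⟨_, hnK, hnM⟩ :=
    ((Nat.frequently_atTop_iff_infinite.mpr hK).and_eventually (hF.eventually_gt_atTop M)).exists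
  exact (hM _ hnK).not_gt hnM

theorem holExact_of_unbounded_on_adapted_sequence_general
    (G : Set ℂ) (hGopen : IsOpen G)
    (a : ℕ → ℂ)
    (hacc : ∀ p ∈ G, ∀ r : ℝ, Metric.infDist p (frontier G) < r →
      {n : ℕ | a n ∈ connectedComponentIn (Metric.ball p r ∩ G) p}.Infinite)
    (F : ℂ → ℂ) (hF : DifferentiableOn ℂ F G)
    (hFa : Filter.Tendsto (fun n => ‖F (a n)‖) Filter.atTop Filter.atTop) :
    HolExact G F := by
  rintro ⟨G₁, G₂, g, hG₁o, hG₁c, hG₂o, hG₂c, hG₂sub, hG₁nsub, hg, hgF⟩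
  obtain ⟨p₀, hp₀⟩ := hG₂c.nonempty
  set C := connectedComponentIn (G ∩ G₁) p₀ with hC
  have hgF_C : EqOn g F C :=
    eqOn_connectedComponentIn_of_eventuallyEq (hGopen.inter hG₁o) (hg.mono inter_subset_right)
      (hF.mono inter_subset_left) (hG₂sub hp₀) (eventuallyEq_of_mem (hG₂o.mem_nhds hp₀) hgF)
  obtain ⟨w, hwG₁, hwC, hwG⟩ := exists_mem_closure_connectedComponentIn_inter_notMem hGopen hG₁o
    hG₁c.isPreconnected (hG₂sub hp₀) hG₁nsub
  have hw_frontier : w ∈ frontier G :=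
    ⟨closure_mono (fun x hx => (connectedComponentIn_subset _ _ hx).1) hwC,
      by rwa [hGopen.interior_eq]⟩
  obtain ⟨p, hpC, ε, hball, hdist⟩ :=
    exists_closedBall_subset_of_mem_closure hwC hw_frontier (hG₁o.mem_nhds hwG₁)
  obtain ⟨M, hM⟩ := (isCompact_closedBall p ε).exists_bound_of_continuousOn
    (hg.continuousOn.mono hball)
  have hK : connectedComponentIn (ball p ε ∩ G) p ⊆ C := by
    rw [hC, connectedComponentIn_eq hpC]
    exact connectedComponentIn_mono p fun x hx => ⟨hx.2, hball (ball_subset_closedBall hx.1)⟩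
  have hF_bdd : ∀ x ∈ connectedComponentIn (ball p ε ∩ G) p, ‖F x‖ ≤ M := fun x hx => by
    rw [← hgF_C (hK hx)]
    exact hM x (ball_subset_closedBall (connectedComponentIn_subset _ _ hx).1)
  exact not_tendsto_norm_atTop_of_infinite_of_bounded
    (hacc p (connectedComponentIn_subset _ _ hpC).1 ε hdist) hF_bdd hFa

/-- Let `G ⊆ ℂ` be a domain and `(a_n)` a sequence in `G` such that
for every `a ∈ G` and every `r > dist(a, ∂G)`, the connected component of
`B(a,r) ∩ G` containing `a` contains infinitely many of the `a_n`.  If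
`F ∈ H(G)` satisfies `|F(a_n)| → +∞`, then `F ∈ H_e(G)`. -/
theorem holExact_of_unbounded_on_adapted_sequence
    (G : Set ℂ) (hGopen : IsOpen G) (hGconn : IsConnected G) (hGne : G ≠ Set.univ)
    (a : ℕ → ℂ) (haG : ∀ n, a n ∈ G)
    (hacc : ∀ p ∈ G, ∀ r : ℝ, Metric.infDist p (frontier G) < r →
      {n : ℕ | a n ∈ connectedComponentIn (Metric.ball p r ∩ G) p}.Infinite)
    (F : ℂ → ℂ) (hF : DifferentiableOn ℂ F G)
    (hFa : Filter.Tendsto (fun n => ‖F (a n)‖) Filter.atTop Filter.atTop) :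
    HolExact G F :=
  holExact_of_unbounded_on_adapted_sequence_general G hGopen a hacc F hF hFa
end

section
/- Let G ⊆ ℂ be a domain, z₀ ∈ ∂G, and F ∈ H(G) such that there is a sequence of points w_l ∈ ∂G converging to points densely near z₀ with the property that the radius of convergence of F at points of G approaching each w_l is 0, in the following precise sense: there exist constants and indices n(p,l) with F^{(j)}(w_l) = c·j!·j^j for all j ≥ n(p,l), c ≠ 0, where F extends C^∞ to the closure. Then F has no holomorphic extension to any open ball B with B ∩ ∂G ≠ ∅ containing some w_l. -/
/-! The Taylor coefficients `F^{(j)}(w)/j!` of a function analytic at `w` are `O(ρ⁻ʲ)` for some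
`ρ > 0`, whereas `c · jʲ` is not: `(j ρ)ʲ → ∞`. An extension `g` of `F` holomorphic near a boundary
point `w` would have `g^{(j)}(w) = F^{(j)}(w)`, since `g^{(j)}` and the continuous extension of
`F^{(j)}` agree on `G` and are both continuous on `closure G` near `w`. -/

open Filter Set

lemma tendsto_natCast_mul_pow_self_atTop {ρ : ℝ} (hρ : 0 < ρ) :
    Tendsto (fun j : ℕ ↦ ((j : ℝ) * ρ) ^ j) atTop atTop := by
  have hlin : Tendsto (fun j : ℕ ↦ (j : ℝ) * ρ) atTop atTop :=
    tendsto_natCast_atTop_atTop.atTop_mul_const hρ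
  refine tendsto_atTop_mono' atTop ?_ hlin
  filter_upwards [hlin.eventually_ge_atTop 1, eventually_ne_atTop 0] with j hj hj0
  exact le_self_pow₀ hj hj0

section Taylor

variable {𝕜 : Type*} [RCLike 𝕜] {f : 𝕜 → 𝕜} {x : 𝕜}

lemma AnalyticAt.exists_norm_iteratedDeriv_div_factorial_mul_pow_le (hf : AnalyticAt 𝕜 f x) :
    ∃ ρ : ℝ, 0 < ρ ∧ ∃ C, ∀ j, ‖iteratedDeriv j f x / j.factorial‖ * ρ ^ j ≤ C := by
  obtain ⟨ρ, hρ0, hρ⟩ := ENNReal.lt_iff_exists_nnreal_btwn.mp hf.hasFPowerSeriesAt.radius_pos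
  obtain ⟨C, -, hC⟩ := FormalMultilinearSeries.norm_mul_pow_le_of_lt_radius _ hρ
  refine ⟨ρ, by exact_mod_cast hρ0, C, fun j ↦ ?_⟩
  simpa only [FormalMultilinearSeries.ofScalars_norm] using hC j

theorem not_analyticAt_of_iteratedDeriv_eq_mul_factorial_mul_pow {c : 𝕜} (hc : c ≠ 0)
    (h : ∀ᶠ j in atTop, iteratedDeriv j f x = c * j.factorial * (j : 𝕜) ^ j) :
    ¬ AnalyticAt 𝕜 f x := by
  intro hf
  obtain ⟨ρ, hρ, C, hC⟩ := hf.exists_norm_iteratedDeriv_div_factorial_mul_pow_le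
  have hgrow : Tendsto (fun j : ℕ ↦ ‖c‖ * ((j : ℝ) * ρ) ^ j) atTop atTop :=
    (tendsto_natCast_mul_pow_self_atTop hρ).const_mul_atTop (norm_pos_iff.mpr hc)
  obtain ⟨j, hj, hCj⟩ := (h.and (hgrow.eventually_gt_atTop C)).exists
  have hcoeff : iteratedDeriv j f x / j.factorial = c * (j : 𝕜) ^ j := by
    rw [hj, mul_right_comm, mul_div_cancel_right₀ _ (by exact_mod_cast j.factorial_ne_zero)]
  have := hC j
  rw [hcoeff, norm_mul, norm_pow, RCLike.norm_natCast, mul_assoc, ← mul_pow] at this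
  linarith

end Taylor

theorem Set.EqOn.iteratedDeriv_of_continuousOn_closure {𝕜 E : Type*} [NontriviallyNormedField 𝕜]
    [NormedAddCommGroup E] [NormedSpace 𝕜 E] {G U : Set 𝕜} {g F Fj : 𝕜 → E} {j : ℕ}
    (hgF : EqOn g F G) (hG : IsOpen G) (hGU : G ⊆ U)
    (hg : ContinuousOn (iteratedDeriv j g) U) (hFj : ContinuousOn Fj (closure G))
    (hFjF : EqOn Fj (iteratedDeriv j F) G) :
    EqOn (iteratedDeriv j g) Fj (U ∩ closure G) :=
  ((hgF.iteratedDeriv_of_isOpen hG j).trans hFjF.symm).of_subset_closure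
    (hg.mono inter_subset_left) (hFj.mono inter_subset_right)
    (subset_inter hGU subset_closure) inter_subset_right

theorem no_extension_to_ball_of_fast_boundary_derivatives_general
    (G : Set ℂ) (hGopen : IsOpen G)
    (F : ℂ → ℂ)
    (Fj : ℕ → ℂ → ℂ)
    (hFj : ∀ j, ContinuousOn (Fj j) (closure G) ∧ Set.EqOn (Fj j) (iteratedDeriv j F) G)
    (w : ℕ → ℂ) (hw : ∀ l, w l ∈ frontier G)
    (c : ℂ) (hc : c ≠ 0) (n : ℕ → ℕ)
    (hval : ∀ l, ∀ j, n l ≤ j → Fj j (w l) = c * (j.factorial : ℂ) * (j : ℂ) ^ j) :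
    ∀ (z₀ : ℂ) (r : ℝ), 0 < r → (Metric.ball z₀ r ∩ frontier G).Nonempty →
      (∃ l, w l ∈ Metric.ball z₀ r) →
      ¬ ∃ g : ℂ → ℂ, DifferentiableOn ℂ g (Metric.ball z₀ r ∪ G) ∧ Set.EqOn g F G := by
  rintro z₀ r - - ⟨l, hl⟩ ⟨g, hg, hgF⟩
  have hga : AnalyticOnNhd ℂ g (Metric.ball z₀ r ∪ G) :=
    hg.analyticOnNhd (Metric.isOpen_ball.union hGopen)
  refine not_analyticAt_of_iteratedDeriv_eq_mul_factorial_mul_pow hc ?_ (hga (w l) (Or.inl hl))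
  filter_upwards [eventually_ge_atTop (n l)] with j hj
  have hgj : ContinuousOn (iteratedDeriv j g) (Metric.ball z₀ r ∪ G) := by
    rw [iteratedDeriv_eq_iterate]
    exact (hga.iterated_deriv j).continuousOn
  rw [← hval l j hj]
  exact hgF.iteratedDeriv_of_continuousOn_closure hGopen subset_union_right hgj (hFj j).1 (hFj j).2
    ⟨Or.inl hl, (hw l).1⟩

/-- Let `G ⊆ ℂ` be a domain and `F ∈ A^∞(G)`, i.e. every derivative
`F^{(j)}` extends continuously to `Ḡ` (the extensions are the `Fj j`).  Suppose
there are boundary points `w l ∈ ∂G` and a constant `c ≠ 0` with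
`F^{(j)}(w l) = c · j! · j^j` for all `j ≥ n l`.  Then `F` has no holomorphic
extension to `B ∪ G` for any open ball `B` meeting `∂G` and containing some
`w l`. -/
theorem no_extension_to_ball_of_fast_boundary_derivatives
    (G : Set ℂ) (hGopen : IsOpen G) (hGconn : IsConnected G) (hGne : G ≠ Set.univ)
    (F : ℂ → ℂ) (hF : DifferentiableOn ℂ F G)
    (Fj : ℕ → ℂ → ℂ)
    (hFj : ∀ j, ContinuousOn (Fj j) (closure G) ∧ Set.EqOn (Fj j) (iteratedDeriv j F) G)
    (w : ℕ → ℂ) (hw : ∀ l, w l ∈ frontier G)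
    (c : ℂ) (hc : c ≠ 0) (n : ℕ → ℕ)
    (hval : ∀ l, ∀ j, n l ≤ j → Fj j (w l) = c * (j.factorial : ℂ) * (j : ℂ) ^ j) :
    ∀ (z₀ : ℂ) (r : ℝ), 0 < r → (Metric.ball z₀ r ∩ frontier G).Nonempty →
      (∃ l, w l ∈ Metric.ball z₀ r) →
      ¬ ∃ g : ℂ → ℂ, DifferentiableOn ℂ g (Metric.ball z₀ r ∪ G) ∧ Set.EqOn g F G :=
  no_extension_to_ball_of_fast_boundary_derivatives_general G hGopen F Fj hFj w hw c hc n hval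
end

section
/- Let X be a Fréchet space and M an infinite dimensional linear subspace of X, and let Y be a closed linear subspace of X with Y ∩ M = {0} and M ⊆ X. Then Y has infinite codimension in the closed subspace X' = closure of M, and consequently X' \ Y is spaceable in X'. -/
/-!
`M` embeds into `closure M ⧸ Y` because `Y ∩ M = 0`; this is the infinite codimension.

For spaceability, pass to a separable subspace `N ≤ M` of infinite rank. The separable set
`Y ∩ closure N` has a countable separating family of functionals `Bₜ` (Hahn–Banach applied to the
points of a dense sequence and the members of a countable basis of convex neighbourhoods of `0`).
Choose inductively `uₘ ∈ N` and functionals `fₘ` vanishing on `Y`, biorthogonal to `(uₘ)`, with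
`Bₜ uₘ = 0` for `t < m`. Then `gₜ = Bₜ - ∑_{s ≤ t} Bₜ(uₛ) fₛ` kills every `uₘ` and agrees with `Bₜ`
on `Y`, so `Z = closure N ∩ ⋂ₜ ker gₜ` is closed, contains the independent `uₘ`, and meets `Y` only
in `0`.
-/

open Cardinal Submodule Topology RCLike

theorem rank_le_rank_quotient_comap_of_inf_eq_bot {R V : Type*} [Ring R] [AddCommGroup V]
    [Module R V] {M P Y : Submodule R V} (hMP : M ≤ P) (hYM : Y ⊓ M = ⊥) :
    Module.rank R M ≤ Module.rank R (P ⧸ Y.comap P.subtype) := by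
  refine LinearMap.rank_le_of_injective ((Y.comap P.subtype).mkQ ∘ₗ inclusion hMP) ?_
  rw [← LinearMap.ker_eq_bot, LinearMap.ker_comp, ker_mkQ, eq_bot_iff]
  rintro x hx
  have : (x : V) ∈ Y ⊓ M := ⟨hx, x.2⟩
  rw [hYM, mem_bot] at this
  exact (mem_bot R).mpr (Subtype.ext this)

theorem exists_mem_ker_notMem_sup {K V W : Type*} [Field K] [AddCommGroup V] [Module K V]
    [AddCommGroup W] [Module K W] [FiniteDimensional K W] (f : V →ₗ[K] W)
    {N Y T : Submodule K V} (hN : ℵ₀ ≤ Module.rank K N) (hYN : Y ⊓ N = ⊥) (hTN : T ≤ N)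
    [FiniteDimensional K T] : ∃ x ∈ N, f x = 0 ∧ x ∉ Y ⊔ T := by
  by_contra! h
  have hker : N ⊓ LinearMap.ker f ≤ T := by
    rintro x ⟨hxN, hxf⟩
    -- modular law: `(T ⊔ Y) ⊓ N = T ⊔ (Y ⊓ N)` since `T ≤ N`
    have : x ∈ (T ⊔ Y) ⊓ N := ⟨sup_comm Y T ▸ h x hxN hxf, hxN⟩
    rwa [sup_inf_assoc_of_le Y hTN, hYN, sup_bot_eq] at this
  have hfg : N.FG := fg_of_fg_map_of_fg_inf_ker f (IsNoetherian.noetherian _)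
    ((fg_iff_finiteDimensional _).mpr (finiteDimensional_of_le hker))
  have : Module.Finite K N := (fg_iff_finiteDimensional N).mp hfg
  exact (Module.rank_lt_aleph0 K N).not_ge hN

theorem Submodule.exists_le_isSeparable_aleph0_le_rank {𝕜 X : Type*} [RCLike 𝕜] [AddCommGroup X]
    [Module 𝕜 X] [TopologicalSpace X] [ContinuousAdd X] [ContinuousSMul 𝕜 X]
    {M : Submodule 𝕜 X} (hM : ℵ₀ ≤ Module.rank 𝕜 M) :
    ∃ N ≤ M, TopologicalSpace.IsSeparable (N : Set X) ∧ ℵ₀ ≤ Module.rank 𝕜 N := by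
  obtain ⟨s, hs, hind⟩ := le_rank_iff_exists_linearIndependent.mp hM
  refine ⟨(span 𝕜 s).map M.subtype, map_subtype_le _ _, ?_, ?_⟩
  · rw [map_span]
    exact ((le_aleph0_iff_set_countable.mp hs.le).image _).isSeparable.span
  · rw [rank_map_eq M.injective_subtype, rank_span_set hind, hs]

section

variable {𝕜 X : Type*} [RCLike 𝕜] [AddCommGroup X] [Module 𝕜 X] [Module ℝ X]
  [IsScalarTower ℝ 𝕜 X] [TopologicalSpace X] [IsTopologicalAddGroup X] [ContinuousSMul 𝕜 X]
  [LocallyConvexSpace ℝ X]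

theorem Submodule.exists_clm_vanishing_apply_eq_one {W : Submodule 𝕜 X}
    (hW : IsClosed (W : Set X)) {x : X} (hx : x ∉ W) :
    ∃ f : X →L[𝕜] 𝕜, (∀ w ∈ W, f w = 0) ∧ f x = 1 := by
  obtain ⟨f, u, hfW, hfx⟩ :=
    geometric_hahn_banach_closed_point (𝕜 := 𝕜) (W.restrictScalars ℝ).convex hW hx
  -- `re ∘ f` is bounded above on the subspace `W`, which forces `f = 0` there
  have hf : ∀ w ∈ W, f w = 0 := by
    intro w hw
    by_contra hne
    have := hfW (((u : 𝕜) / f w) • w) (W.smul_mem _ hw)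
    rw [map_smul, smul_eq_mul, div_mul_cancel₀ _ hne, ofReal_re] at this
    exact this.false
  have hfx0 : f x ≠ 0 := fun h0 => by simpa [h0] using (hfW 0 W.zero_mem).trans hfx
  exact ⟨(f x)⁻¹ • f, fun w hw => by simp [hf w hw], by simp [hfx0]⟩

theorem TopologicalSpace.IsSeparable.exists_separating_seq_clm [FirstCountableTopology X]
    [T1Space X] {s : Set X} (hs : IsSeparable s) :
    ∃ B : ℕ → X →L[𝕜] 𝕜, ∀ y ∈ s, (∀ n, B n y = 0) → y = 0 := by
  have := IsScalarTower.continuousSMul (M := ℝ) (α := X) 𝕜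
  obtain ⟨c, hc, hsc⟩ := hs
  obtain ⟨d, hd⟩ := (hc.insert 0).exists_eq_range (Set.insert_nonempty 0 c)
  obtain ⟨U, hU, hUbasis⟩ :=
    (LocallyConvexSpace.convex_open_basis_zero ℝ X).exists_antitone_subbasis
  have hsep : ∀ j n, ∃ φ : X →L[𝕜] 𝕜, d j ∉ U n → ∀ a ∈ U n, re (φ a) < re (φ (d j)) := by
    intro j n
    by_cases hj : d j ∈ U n
    · exact ⟨0, fun h => (h hj).elim⟩
    · obtain ⟨φ, hφ⟩ := geometric_hahn_banach_open_point (𝕜 := 𝕜) (hU n).2.2 (hU n).2.1 hj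
      exact ⟨φ, fun _ => hφ⟩
  choose φ hφ using hsep
  refine ⟨fun t => φ t.unpair.1 t.unpair.2, fun y hy hφy => ?_⟩
  by_contra hy0
  -- take `U n` so small that `y ∉ U n - U n` and `d j` with `d j - y ∈ U n`; then `d j ∉ U n`,
  -- and the functional separating `d j` from `U n` has positive real part at `y`
  obtain ⟨V, hV, hVy⟩ := exists_nhds_half_neg (isOpen_compl_singleton.mem_nhds (Ne.symm hy0))
  obtain ⟨n, -, hnV⟩ := hUbasis.1.mem_iff.mp hV
  have hUy : {x | x - y ∈ U n} ∈ 𝓝 y :=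
    (continuous_sub_right y).continuousAt.preimage_mem_nhds
      (by rw [sub_self]; exact hUbasis.1.mem_of_mem trivial)
  obtain ⟨_, hjy, j, rfl⟩ := mem_closure_iff_nhds.mp
    (closure_mono (hd ▸ Set.subset_insert 0 c) (hsc hy)) _ hUy
  have hj : d j ∉ U n := fun hj => hVy _ (hnV hj) _ (hnV hjy) (sub_sub_cancel (d j) y)
  have := hφ j n hj _ hjy
  have hzero := hφy (Nat.pair j n)
  simp only [Nat.unpair_pair] at hzero
  rw [map_sub, hzero, sub_zero] at this
  exact this.false

theorem exists_biorthogonal_seq [T2Space X] {N Y : Submodule 𝕜 X}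
    (hN : ℵ₀ ≤ Module.rank 𝕜 N) (hY : IsClosed (Y : Set X)) (hYN : Y ⊓ N = ⊥)
    (B : ℕ → X →L[𝕜] 𝕜) :
    ∃ (u : ℕ → X) (f : ℕ → X →L[𝕜] 𝕜), (∀ m, u m ∈ N) ∧ (∀ m, ∀ y ∈ Y, f m y = 0) ∧
      Pairwise (fun k m => f k (u m) = 0) ∧ (∀ m, f m (u m) = 1) ∧
      ∀ t m, t < m → B t (u m) = 0 := by
  classical
  -- each term carries a label `i` and is killed by `B 0, …, B (i - 1)`; labels strictly
  -- increase, so the `m`-th one is at least `m`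
  let P : ℕ × X × (X →L[𝕜] 𝕜) → Prop := fun p =>
    p.2.1 ∈ N ∧ (∀ y ∈ Y, p.2.2 y = 0) ∧ p.2.2 p.2.1 = 1 ∧ ∀ t < p.1, B t p.2.1 = 0
  let r : ℕ × X × (X →L[𝕜] 𝕜) → ℕ × X × (X →L[𝕜] 𝕜) → Prop := fun p q =>
    p.1 < q.1 ∧ p.2.2 q.2.1 = 0 ∧ q.2.2 p.2.1 = 0
  obtain ⟨F, hP, hr⟩ := exists_seq_of_forall_finset_exists P r <| by
    intro s hs
    let i := s.sup Prod.fst + 1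
    let T := span 𝕜 (s.image fun p => p.2.1 : Set X)
    have hTN : T ≤ N := span_le.mpr <| by
      simp only [Finset.coe_image, Set.image_subset_iff]
      exact fun p hp => (hs p hp).1
    let φ : s ⊕ Fin i → X →ₗ[𝕜] 𝕜 := Sum.elim (fun p => p.1.2.2) (fun t => B t)
    obtain ⟨x, hxN, hφx, hxT⟩ := exists_mem_ker_notMem_sup (LinearMap.pi φ) hN hYN hTN
    obtain ⟨g, hg, hgx⟩ := exists_clm_vanishing_apply_eq_one
      (isClosed_sup_finiteDimensional Y T hY) hxT
    refine ⟨(i, x, g), ⟨hxN, fun y hy => hg y (mem_sup_left hy), hgx,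
      fun t ht => congrFun hφx (Sum.inr ⟨t, ht⟩)⟩, fun p hp => ⟨?_, ?_, ?_⟩⟩
    · exact Nat.lt_succ_of_le (Finset.le_sup hp)
    · exact congrFun hφx (Sum.inl ⟨p, hp⟩)
    · exact hg _ (mem_sup_right (subset_span (Finset.mem_image_of_mem _ hp)))
  have hlabel : StrictMono fun m => (F m).1 := fun m n hmn => (hr m n hmn).1
  refine ⟨fun m => (F m).2.1, fun m => (F m).2.2, fun m => (hP m).1, fun m => (hP m).2.1,
    fun k m hkm => ?_, fun m => (hP m).2.2.1,
    fun t m htm => (hP m).2.2.2 t (htm.trans_le (hlabel.id_le m))⟩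
  rcases hkm.lt_or_gt with h | h
  · exact (hr k m h).2.1
  · exact (hr m k h).2.2

theorem exists_isClosed_le_topologicalClosure_inf_eq_bot [T2Space X] [FirstCountableTopology X]
    {N Y : Submodule 𝕜 X} (hN : ℵ₀ ≤ Module.rank 𝕜 N)
    (hNs : TopologicalSpace.IsSeparable (N : Set X)) (hY : IsClosed (Y : Set X))
    (hYN : Y ⊓ N = ⊥) :
    ∃ Z : Submodule 𝕜 X, Z ≤ N.topologicalClosure ∧ IsClosed (Z : Set X) ∧
      ℵ₀ ≤ Module.rank 𝕜 Z ∧ Z ⊓ Y = ⊥ := by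
  have hYNs : TopologicalSpace.IsSeparable ((Y : Set X) ∩ closure N) :=
    hNs.closure.mono Set.inter_subset_right
  obtain ⟨B, hB⟩ := hYNs.exists_separating_seq_clm (𝕜 := 𝕜)
  obtain ⟨u, f, huN, hfY, hfu, hfuu, hBu⟩ := exists_biorthogonal_seq hN hY hYN B
  have hfδ : ∀ s m, f s (u m) = if s = m then 1 else 0 := fun s m => by
    split_ifs with h
    · exact h ▸ hfuu s
    · exact hfu h
  let g : ℕ → X →L[𝕜] 𝕜 := fun t => B t - ∑ s ∈ Finset.range (t + 1), B t (u s) • f s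
  have hgu : ∀ t m, g t (u m) = 0 := fun t m => by
    by_cases h : m < t + 1
    · simp [g, hfδ, h]
    · simp [g, hfδ, h, hBu t m (by omega)]
  have hgY : ∀ t, ∀ y ∈ Y, g t y = B t y := fun t y hy => by simp [g, hfY _ y hy]
  let Z := N.topologicalClosure ⊓ ⨅ t, LinearMap.ker (g t : X →ₗ[𝕜] 𝕜)
  have huZ : ∀ m, u m ∈ Z := fun m =>
    ⟨le_topologicalClosure N (huN m), mem_iInf _ |>.mpr fun t => hgu t m⟩
  refine ⟨Z, inf_le_left, ?_, ?_, ?_⟩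
  · rw [coe_inf, coe_iInf]
    exact N.isClosed_topologicalClosure.inter (isClosed_iInter fun t => (g t).isClosed_ker)
  · refine (LinearIndependent.of_pairwise_dual_eq_zero_one (fun m => (⟨u m, huZ m⟩ : Z))
      (fun m => (f m : X →ₗ[𝕜] 𝕜) ∘ₗ Z.subtype) (fun k m h => hfu h) hfuu).aleph0_le_rank
  · refine eq_bot_iff.mpr fun z ⟨hzZ, hzY⟩ => (mem_bot 𝕜).mpr <|
      hB z ⟨hzY, N.topologicalClosure_coe ▸ hzZ.1⟩ fun t => ?_
    rw [← hgY t z hzY]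
    exact (mem_iInf _).mp hzZ.2 t

end

theorem wilansky_kalton_application_general
    (X : Type*) [AddCommGroup X] [Module ℂ X] [Module ℝ X] [IsScalarTower ℝ ℂ X]
    [UniformSpace X] [IsUniformAddGroup X] [ContinuousSMul ℂ X]
    [TopologicalSpace.MetrizableSpace X] [LocallyConvexSpace ℝ X]
    (M Y : Submodule ℂ X)
    (hM : Cardinal.aleph0 ≤ Module.rank ℂ M)
    (hYclosed : IsClosed (Y : Set X)) (hYM : Y ⊓ M = ⊥) :
    Cardinal.aleph0 ≤
      Module.rank ℂ (↥M.topologicalClosure ⧸ Submodule.comap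
        (M.topologicalClosure.subtype) Y) ∧
    ∃ Z : Submodule ℂ X, Z ≤ M.topologicalClosure ∧ IsClosed (Z : Set X) ∧
      Cardinal.aleph0 ≤ Module.rank ℂ Z ∧ Z ⊓ Y = ⊥ := by
  refine ⟨hM.trans (rank_le_rank_quotient_comap_of_inf_eq_bot (le_topologicalClosure M) hYM), ?_⟩
  obtain ⟨N, hNM, hNs, hN⟩ := exists_le_isSeparable_aleph0_le_rank hM
  obtain ⟨Z, hZN, hZ, hZrank, hZY⟩ := exists_isClosed_le_topologicalClosure_inf_eq_bot hN hNs
    hYclosed (eq_bot_mono (inf_le_inf_left Y hNM) hYM)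
  exact ⟨Z, hZN.trans (topologicalClosure_mono hNM), hZ, hZrank, hZY⟩

/-- Let `X` be a Fréchet space (complete metrizable locally convex
topological vector space over `ℂ`), `M` an infinite dimensional subspace and `Y` a
closed subspace with `Y ∩ M = {0}` and `Y ⊆ X' := closure M`.  Then `Y` has
infinite codimension in `X'` and consequently `X' \ Y` is spaceable in `X'`:
there is a closed infinite dimensional subspace `Z ⊆ X'` with `Z ∩ Y = {0}`. -/
theorem wilansky_kalton_application
    (X : Type*) [AddCommGroup X] [Module ℂ X] [Module ℝ X] [IsScalarTower ℝ ℂ X]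
    [UniformSpace X] [IsUniformAddGroup X] [ContinuousSMul ℂ X] [ContinuousSMul ℝ X]
    [CompleteSpace X] [TopologicalSpace.MetrizableSpace X] [LocallyConvexSpace ℝ X]
    (M Y : Submodule ℂ X)
    (hM : Cardinal.aleph0 ≤ Module.rank ℂ M)
    (hYclosed : IsClosed (Y : Set X)) (hYM : Y ⊓ M = ⊥)
    (hYle : Y ≤ M.topologicalClosure) :
    Cardinal.aleph0 ≤
      Module.rank ℂ (↥M.topologicalClosure ⧸ Submodule.comap
        (M.topologicalClosure.subtype) Y) ∧
    ∃ Z : Submodule ℂ X, Z ≤ M.topologicalClosure ∧ IsClosed (Z : Set X) ∧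
      Cardinal.aleph0 ≤ Module.rank ℂ Z ∧ Z ⊓ Y = ⊥ :=
  wilansky_kalton_application_general X M Y hM hYclosed hYM
end

section
/- A separable infinite dimensional F-space (complete metrizable topological vector space) over ℂ has algebraic dimension exactly 𝔠; in particular, it is not countably generated as an algebra or as a vector space. -/
/-!
Upper bound: a separable metrizable space is second countable, so a point is determined by the
basic open sets containing it, and `#X ≤ 2 ^ ℵ₀`.

Lower bound: linear independence of a finite family is an open condition (by compactness of a
shell of coefficient vectors) and, in infinite dimension, a dense one (a proper subspace has empty
interior). This yields families `x n : (Fin n → Bool) → X` and radii `r n → 0` such that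
`closedBall (x (n + 1) t) (r (n + 1)) ⊆ closedBall (x n (Fin.init t)) (r n)` and every family
`r n`-close to `x n` is independent. By completeness each branch `σ : ℕ → Bool` has a limit `Φ σ`;
finitely many branches are separated at some level `N`, where their limits are `r N`-close to
distinct members of `x N`, hence independent. So `Φ` is an independent family of size `𝔠`.
-/

open Filter Topology Metric Cardinal Function

section LinearIndependence

variable {𝕜 X ι : Type*} [NontriviallyNormedField 𝕜] [AddCommGroup X] [Module 𝕜 X]
  [TopologicalSpace X] [ContinuousAdd X] [ContinuousSMul 𝕜 X]

theorem LinearIndependent.eventually_of_properSpace [ProperSpace 𝕜] [T1Space X] [Finite ι]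
    {f : ι → X} (hf : LinearIndependent 𝕜 f) : ∀ᶠ g in 𝓝 f, LinearIndependent 𝕜 g := by
  cases nonempty_fintype ι
  obtain ⟨k, hk⟩ := NormedField.exists_one_lt_norm 𝕜
  -- every nonzero coefficient vector can be rescaled into the compact shell `K`
  set K : Set (ι → 𝕜) := closedBall 0 1 \ ball 0 (1 / ‖k‖)
  have hK : IsCompact K := (isCompact_closedBall 0 1).diff isOpen_ball
  have hcont : Continuous fun p : (ι → X) × (ι → 𝕜) => ∑ i, p.2 i • p.1 i := by fun_prop
  have hKf : ∀ᶠ g in 𝓝 f, ∀ c ∈ K, ∑ i, c i • g i ≠ 0 := by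
    refine hK.eventually_forall_of_forall_eventually fun c hc => hcont.continuousAt.eventually_ne ?_
    have hc0 : c ≠ 0 := by
      rintro rfl
      exact hc.2 (mem_ball_self (by positivity))
    exact fun h => hc0 (funext (Fintype.linearIndependent_iff.1 hf c h))
  filter_upwards [hKf] with g hg
  refine Fintype.linearIndependent_iff.2 fun c hc => ?_
  by_contra hne
  obtain ⟨d, -, hd1, hdk, -⟩ := rescale_to_shell hk one_pos fun h => hne (congrFun h)
  refine hg (d • c) ⟨mem_closedBall_zero_iff.2 hd1.le, fun h => ?_⟩ ?_
  · exact (mem_ball_zero_iff.1 h).not_ge hdk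
  · simp only [Pi.smul_apply, smul_eq_mul, mul_smul, ← Finset.smul_sum, hc, smul_zero]

theorem Submodule.dense_compl_of_ne_top {p : Submodule 𝕜 X} (hp : p ≠ ⊤) : Dense (p : Set X)ᶜ :=
  interior_eq_empty_iff_dense_compl.1 <|
    Set.not_nonempty_iff_eq_empty.1 fun h => hp (p.eq_top_of_nonempty_interior' h)

theorem exists_linearIndependent_forall_mem (hX : ℵ₀ ≤ Module.rank 𝕜 X) :
    ∀ {n : ℕ} (V : Fin n → Set X), (∀ i, IsOpen (V i)) → (∀ i, (V i).Nonempty) →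
      ∃ g : Fin n → X, (∀ i, g i ∈ V i) ∧ LinearIndependent 𝕜 g
  | 0, _, _, _ => ⟨Fin.elim0, Fin.rec0, linearIndependent_empty_type⟩
  | n + 1, V, hVo, hVne => by
    obtain ⟨g, hgV, hg⟩ := exists_linearIndependent_forall_mem hX (V ∘ Fin.castSucc)
      (fun _ => hVo _) (fun _ => hVne _)
    have hspan : Submodule.span 𝕜 (Set.range g) ≠ ⊤ := by
      intro h
      have := rank_span_le (R := 𝕜) (Set.range g)
      rw [h, rank_top] at this
      exact hX.not_gt (this.trans_lt (Set.finite_range g).lt_aleph0)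
    obtain ⟨z, hz, hzV⟩ :=
      (Submodule.dense_compl_of_ne_top hspan).exists_mem_open (hVo (Fin.last n)) (hVne _)
    refine ⟨Fin.snoc g z, Fin.lastCases ?_ fun i => ?_, linearIndependent_finSnoc.2 ⟨hg, hz⟩⟩
    · simpa using hzV
    · simpa using hgV i

theorem dense_setOfPred_linearIndependent [Finite ι] (hX : ℵ₀ ≤ Module.rank 𝕜 X) :
    Dense {f : ι → X | LinearIndependent 𝕜 f} := by
  obtain ⟨n, ⟨e⟩⟩ := Finite.exists_equiv_fin ι
  refine dense_iff_inter_open.2 fun U hU ⟨f, hf⟩ => ?_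
  obtain ⟨V, hV, hVU⟩ := isOpen_pi_iff'.1 hU f hf
  obtain ⟨g, hgV, hg⟩ := exists_linearIndependent_forall_mem hX (V ∘ e.symm)
    (fun _ => (hV _).1) (fun _ => ⟨_, (hV _).2⟩)
  exact ⟨g ∘ e, hVU fun i _ => by simpa using hgV (e i), hg.comp e e.injective⟩

end LinearIndependence

theorem Cardinal.mk_le_continuum_of_secondCountableTopology (X : Type*) [TopologicalSpace X]
    [T0Space X] [SecondCountableTopology X] : #X ≤ 𝔠 := by
  let B := TopologicalSpace.countableBasis X
  have hB := TopologicalSpace.isBasis_countableBasis X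
  have hinj : Injective fun x : X => {b : B | x ∈ (b : Set X)} := by
    intro x y hxy
    have hmem : ∀ t ∈ B, x ∈ t ↔ y ∈ t := fun t ht => Set.ext_iff.1 hxy ⟨t, ht⟩
    exact Inseparable.eq <| hB.nhds_hasBasis.eq_of_same_basis <|
      hB.nhds_hasBasis.congr (fun t => and_congr_right fun ht => (hmem t ht).symm) fun _ _ => rfl
  calc #X ≤ #(Set B) := mk_le_of_injective hinj
    _ ≤ 2 ^ ℵ₀ := by
      rw [mk_set]
      exact power_le_power_left two_ne_zero (TopologicalSpace.countable_countableBasis X).le_aleph0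
    _ = 𝔠 := two_power_aleph0

theorem tendsto_zero_of_le_half {r : ℕ → ℝ} (h0 : ∀ n, 0 ≤ r n) (h : ∀ n, r (n + 1) ≤ r n / 2) :
    Tendsto r atTop (𝓝 0) := by
  have hle : ∀ n, r n ≤ r 0 * (1 / 2) ^ n := by
    intro n
    induction n with
    | zero => simp
    | succ n ih => rw [pow_succ]; linarith [h n]
  refine squeeze_zero h0 hle ?_
  simpa using (tendsto_pow_atTop_nhds_zero_of_lt_one (r := (1 / 2 : ℝ)) (by norm_num)
    (by norm_num)).const_mul (r 0)

theorem exists_forall_mem_closedBall_of_succ_subset {Z : Type*} [PseudoMetricSpace Z]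
    [CompleteSpace Z] {c : ℕ → Z} {r : ℕ → ℝ} (hr0 : ∀ n, 0 ≤ r n)
    (hsub : ∀ n, closedBall (c (n + 1)) (r (n + 1)) ⊆ closedBall (c n) (r n))
    (hr : Tendsto r atTop (𝓝 0)) : ∃ a, ∀ n, a ∈ closedBall (c n) (r n) := by
  have hanti : Antitone fun n => closedBall (c n) (r n) := antitone_nat_of_succ_le hsub
  have hdiam : Tendsto (fun n => diam (closedBall (c n) (r n))) atTop (𝓝 0) := by
    refine squeeze_zero (fun _ => diam_nonneg) (fun n => diam_closedBall (hr0 n)) ?_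
    simpa using hr.const_mul 2
  obtain ⟨a, ha⟩ := nonempty_iInter_of_nonempty_biInter (fun _ => isClosed_closedBall)
    (fun _ => isBounded_closedBall)
    (fun N => ⟨c N, Set.mem_iInter₂.2 fun _ hn => hanti hn (mem_closedBall_self (hr0 N))⟩) hdiam
  exact ⟨a, Set.mem_iInter.1 ha⟩

theorem eventually_injOn_restrict_fin {α : Type*} {s : Set (ℕ → α)} (hs : s.Finite) :
    ∀ᶠ n in atTop, s.InjOn fun (σ : ℕ → α) (i : Fin n) => σ i := by
  refine (eventually_all_finite hs).2 fun σ _ => (eventually_all_finite hs).2 fun τ _ => ?_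
  by_cases h : σ = τ
  · exact .of_forall fun _ _ => h
  obtain ⟨m, hm⟩ := Function.ne_iff.1 h
  filter_upwards [eventually_gt_atTop m] with n hn heq
  exact absurd (congrFun heq ⟨m, hn⟩) hm

section RobustlyLinearIndependent

variable {𝕜 X ι κ : Type*} [Semiring 𝕜] [AddCommMonoid X] [Module 𝕜 X] [PseudoMetricSpace X]

variable (𝕜) in
def RobustlyLinearIndependent (v : ι → X) (ρ : ℝ) : Prop :=
  ∀ w : ι → X, (∀ i, dist (w i) (v i) ≤ ρ) → LinearIndependent 𝕜 w

theorem RobustlyLinearIndependent.comp {v : ι → X} {ρ : ℝ}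
    (hv : RobustlyLinearIndependent 𝕜 v ρ) (hρ : 0 ≤ ρ) {e : κ → ι} (he : Injective e) :
    RobustlyLinearIndependent 𝕜 (v ∘ e) ρ := by
  classical
  intro w hw
  have hext : ∀ i, dist (extend e w v i) (v i) ≤ ρ := by
    intro i
    by_cases h : ∃ k, e k = i
    · obtain ⟨k, rfl⟩ := h
      simpa [he.extend_apply] using hw k
    · simpa [extend_apply' _ _ _ h] using hρ
  simpa [Function.comp_def, he.extend_apply] using (hv _ hext).comp e he

end RobustlyLinearIndependent

section Metric

variable {𝕜 X ι : Type*} [NontriviallyNormedField 𝕜] [ProperSpace 𝕜] [AddCommGroup X]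
  [Module 𝕜 X] [PseudoMetricSpace X] [ContinuousAdd X] [ContinuousSMul 𝕜 X] [T1Space X]

theorem exists_robustlyLinearIndependent_near [Finite ι] (hX : ℵ₀ ≤ Module.rank 𝕜 X)
    (f : ι → X) {ε : ℝ} (hε : 0 < ε) :
    ∃ g : ι → X, (∀ i, dist (g i) (f i) ≤ ε) ∧
      ∃ ρ, 0 < ρ ∧ ρ ≤ ε ∧ RobustlyLinearIndependent 𝕜 g ρ := by
  cases nonempty_fintype ι
  obtain ⟨g, hgf, hg⟩ := Metric.dense_iff.1 (dense_setOfPred_linearIndependent (ι := ι) hX) f ε hε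
  obtain ⟨δ, hδ, hδg⟩ := Metric.eventually_nhds_iff.1 hg.eventually_of_properSpace
  refine ⟨g, fun i => (dist_le_pi_dist g f i).trans (mem_ball.1 hgf).le, min (δ / 2) ε,
    by positivity, min_le_right _ _, fun w hw => hδg ?_⟩
  calc dist w g ≤ min (δ / 2) ε := (dist_pi_le_iff (by positivity)).2 hw
    _ < δ := (min_le_left _ _).trans_lt (half_lt_self hδ)

theorem exists_linearIndependent_scheme (hX : ℵ₀ ≤ Module.rank 𝕜 X) :
    ∃ (x : ∀ n, (Fin n → Bool) → X) (r : ℕ → ℝ), (∀ n, 0 < r n) ∧ (∀ n, r (n + 1) ≤ r n / 2) ∧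
      (∀ n t, dist (x (n + 1) t) (x n (Fin.init t)) ≤ r n / 2) ∧
      ∀ n, RobustlyLinearIndependent 𝕜 (x n) (r n) := by
  choose g hg ρ hρ hρε hrob using
    fun n (p : ((Fin n → Bool) → X) × {ε : ℝ // 0 < ε}) =>
      exists_robustlyLinearIndependent_near (𝕜 := 𝕜) hX
        (fun t : Fin (n + 1) → Bool => p.1 (Fin.init t)) (half_pos p.2.2)
  obtain ⟨g₀, -, ρ₀, hρ₀, -, hrob₀⟩ :=
    exists_robustlyLinearIndependent_near (𝕜 := 𝕜) hX (0 : (Fin 0 → Bool) → X) one_pos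
  let level (n : ℕ) : ((Fin n → Bool) → X) × {ε : ℝ // 0 < ε} :=
    Nat.rec (g₀, ⟨ρ₀, hρ₀⟩) (fun n p => (g n p, ⟨ρ n p, hρ n p⟩)) n
  refine ⟨fun n => (level n).1, fun n => (level n).2, fun n => (level n).2.2,
    fun n => hρε n (level n), fun n => hg n (level n), ?_⟩
  rintro (_ | n)
  exacts [hrob₀, hrob n (level n)]

theorem exists_linearIndependent_nat_bool_of_aleph0_le_rank [CompleteSpace X]
    (hX : ℵ₀ ≤ Module.rank 𝕜 X) : ∃ Φ : (ℕ → Bool) → X, LinearIndependent 𝕜 Φ := by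
  obtain ⟨x, r, hr0, hr, hx, hrob⟩ := exists_linearIndependent_scheme hX
  choose Φ hΦ using fun σ : ℕ → Bool =>
    exists_forall_mem_closedBall_of_succ_subset (c := fun n => x n fun i => σ i)
      (fun n => (hr0 n).le)
      (fun n => closedBall_subset_closedBall' <| by
        have hxn : dist (x (n + 1) fun i => σ i) (x n fun i => σ i) ≤ r n / 2 := hx n _
        linarith [hr n])
      (tendsto_zero_of_le_half (fun n => (hr0 n).le) hr)
  refine ⟨Φ, linearIndependent_iff_finset_linearIndependent.2 fun F => ?_⟩
  obtain ⟨N, hN⟩ := (eventually_injOn_restrict_fin F.finite_toSet).exists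
  exact (hrob N).comp (hr0 N).le hN.injective _ fun σ => hΦ σ N

theorem continuum_le_rank_of_aleph0_le_rank [CompleteSpace X] (hX : ℵ₀ ≤ Module.rank 𝕜 X) :
    𝔠 ≤ Module.rank 𝕜 X := by
  obtain ⟨Φ, hΦ⟩ := exists_linearIndependent_nat_bool_of_aleph0_le_rank hX
  simpa using hΦ.cardinal_lift_le_rank

end Metric

/-- A separable infinite dimensional F-space (complete metrizable
topological vector space) over `ℂ` has algebraic dimension exactly `𝔠`; in
particular it is not countably generated as a vector space. -/
theorem separable_infinite_dim_F_space_rank_continuum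
    (X : Type*) [AddCommGroup X] [Module ℂ X]
    [UniformSpace X] [IsUniformAddGroup X] [ContinuousSMul ℂ X]
    [CompleteSpace X] [TopologicalSpace.MetrizableSpace X]
    [TopologicalSpace.SeparableSpace X]
    (hinf : Cardinal.aleph0 ≤ Module.rank ℂ X) :
    Module.rank ℂ X = Cardinal.continuum ∧
    ¬ ∃ s : Set X, s.Countable ∧ Submodule.span ℂ s = ⊤ := by
  have : (uniformity X).IsCountablyGenerated := IsUniformAddGroup.uniformity_countably_generated
  -- a metric inducing the given uniformity, so that `X` stays complete
  let := UniformSpace.pseudoMetricSpace X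
  have hrank : Module.rank ℂ X = 𝔠 :=
    le_antisymm ((rank_le_card ℂ X).trans (mk_le_continuum_of_secondCountableTopology X))
      (continuum_le_rank_of_aleph0_le_rank hinf)
  refine ⟨hrank, fun ⟨s, hs, hspan⟩ => ?_⟩
  have hspan_le := rank_span_le (R := ℂ) s
  rw [hspan, rank_top, hrank] at hspan_le
  exact (hspan_le.trans hs.le_aleph0).not_gt aleph0_lt_continuum
end
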